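/- arXiv:2210.12288 — 3 statements merged into one kernel-verified Lean document; each statement's English description precedes it below -/
import Mathlib

section
/- Let T = (V, E) be a finite rooted tree with nonnegative edge weights w and tree metric d_T, and let μ and ρ be probability vectors on V. Then the optimal transport cost with cost function d_T admits the closed form W_{d_T}(μ, ρ) = Σ_{e∈E} w(e) · |μ(T_{v_e}) − ρ(T_{v_e})|. -/
open SimpleGraph Finset

/-- The unique path between two vertices of a tree. -/
noncomputable def treePath {V : Type*} (G : SimpleGraph V) (hG : G.IsTree) (u v : V) :
    G.Walk u v :=
  (hG.existsUnique_path u v).choose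

/-- The tree metric: the sum of the weights of the edges on the unique path. -/
noncomputable def treeDist {V : Type*} (G : SimpleGraph V) (hG : G.IsTree)
    (w : Sym2 V → ℝ) (u v : V) : ℝ :=
  (((treePath G hG u v).edges).map w).sum

/-- `μ(T_v)`: the total mass assigned by `μ` to the subtree rooted at `v`
(vertices `u` such that `v` lies on the unique path from the root `r` to `u`). -/
noncomputable def subtreeMass {V : Type*} [Fintype V] [DecidableEq V]
    (G : SimpleGraph V) (hG : G.IsTree) (r v : V) (μ : V → ℝ) : ℝ :=
  ∑ u ∈ Finset.univ.filter (fun u => v ∈ (treePath G hG r u).support), μ u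

/-- A probability vector on a finite set. -/
def IsProbVector {X : Type*} [Fintype X] (μ : X → ℝ) : Prop :=
  (∀ x, 0 ≤ μ x) ∧ ∑ x, μ x = 1

/-- A coupling of two probability vectors. -/
def IsCoupling {X : Type*} [Fintype X] (μ ρ : X → ℝ) (P : X × X → ℝ) : Prop :=
  (∀ p, 0 ≤ P p) ∧ (∀ y, ∑ x, P (x, y) = ρ y) ∧ (∀ x, ∑ y, P (x, y) = μ x)

/-- The optimal transport cost for cost function `D`. -/
noncomputable def OTCost {X : Type*} [Fintype X] (D : X × X → ℝ) (μ ρ : X → ℝ) : ℝ :=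
  sInf { c | ∃ P, IsCoupling μ ρ P ∧ c = ∑ x, ∑ y, P (x, y) * D (x, y) }

set_option linter.unusedSectionVars false

namespace TreeW

open SimpleGraph Walk

variable {V : Type*} [DecidableEq V] {G : SimpleGraph V} (hG : G.IsTree)

lemma tp_isPath (u v : V) : (treePath G hG u v).IsPath :=
  (hG.existsUnique_path u v).choose_spec.1

lemma tp_unique {u v : V} {p : G.Walk u v} (hp : p.IsPath) : p = treePath G hG u v :=
  (hG.existsUnique_path u v).choose_spec.2 p hp

lemma tp_self (u : V) : treePath G hG u u = Walk.nil :=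
  (tp_unique hG (by simp)).symm

lemma tp_edge {u v : V} (h : G.Adj u v) : treePath G hG u v = Walk.cons h Walk.nil :=
  (tp_unique hG (by simp [h.ne])).symm

lemma takeUntil_eq {u v c : V} (hc : c ∈ (treePath G hG u v).support) :
    (treePath G hG u v).takeUntil c hc = treePath G hG u c :=
  tp_unique hG ((tp_isPath hG u v).takeUntil hc)

/-- Mutual membership on root-paths implies equality. -/
lemma mutual_mem {r a b : V} (ha : a ∈ (treePath G hG r b).support)
    (hb : b ∈ (treePath G hG r a).support) : a = b := by
  by_contra hne
  set p := treePath G hG r b with hp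
  have hnodup : p.support.Nodup := (tp_isPath hG r b).support_nodup
  have hsplit := p.take_spec ha
  have hsup : p.support = (p.takeUntil a ha).support ++ (p.dropUntil a ha).support.tail := by
    conv_lhs => rw [← hsplit]
    exact Walk.support_append _ _
  have hb' : b ∈ (p.takeUntil a ha).support := by
    rwa [takeUntil_eq hG ha]
  have hb'' : b ∈ (p.dropUntil a ha).support.tail := by
    have hbs : b ∈ (p.dropUntil a ha).support := Walk.end_mem_support _
    have := (p.dropUntil a ha).support_eq_cons
    rw [this] at hbs
    rcases List.mem_cons.mp hbs with h | h
    · exact absurd h.symm hne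
    · exact h
  rw [hsup] at hnodup
  exact (List.disjoint_of_nodup_append hnodup) hb' hb''

/-- Transitivity: if `c` is on the path to `u` and `b` on the path to `c`,
then `b` is on the path to `u`. -/
lemma onPath_trans {r u b c : V} (hc : c ∈ (treePath G hG r u).support)
    (hb : b ∈ (treePath G hG r c).support) : b ∈ (treePath G hG r u).support := by
  rw [← takeUntil_eq hG hc] at hb
  exact Walk.support_takeUntil_subset _ _ hb

section Separation

variable {r a b : V} (hab : G.Adj a b) (ha : a ∈ (treePath G hG r b).support)

/-- Reachability in the graph with edge `s(a,b)` removed. -/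
lemma reach_iff (u v : V) :
    (G.deleteEdges {s(a, b)}).Reachable u v ↔ s(a, b) ∉ (treePath G hG u v).edges := by
  constructor
  · rintro ⟨p'⟩
    intro hmem
    obtain ⟨q, hq⟩ := p'.toPath
    have hle : G.deleteEdges {s(a, b)} ≤ G := SimpleGraph.deleteEdges_le _
    have hsub : ∀ e ∈ q.edges, e ∈ G.edgeSet := fun e he =>
      SimpleGraph.edgeSet_mono hle (q.edges_subset_edgeSet he)
    have hq' : (q.transfer G hsub).IsPath := hq.transfer _
    have := tp_unique hG hq'
    rw [← this, Walk.edges_transfer] at hmem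
    have := q.edges_subset_edgeSet hmem
    rw [SimpleGraph.edgeSet_deleteEdges] at this
    exact this.2 rfl
  · intro hmem
    exact ⟨(treePath G hG u v).toDeleteEdges {s(a, b)}
      (fun e he => by rintro rfl; exact hmem he)⟩

include hG hab in
lemma not_reach_ab : ¬ (G.deleteEdges {s(a, b)}).Reachable a b := by
  rw [reach_iff hG, tp_edge hG hab]
  simp

include hG hab in
lemma side_step : ∀ {u z : V}, G.Walk u z →
    ((G.deleteEdges {s(a, b)}).Reachable a z ∨ (G.deleteEdges {s(a, b)}).Reachable b z) →
    ((G.deleteEdges {s(a, b)}).Reachable a u ∨ (G.deleteEdges {s(a, b)}).Reachable b u) := by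
  intro u z p
  induction p with
  | nil => exact id
  | @cons u x _ h q ih =>
    intro hz
    rcases ih hz with hx | hx
    · by_cases hux : s(u, x) = s(a, b)
      · rw [Sym2.eq_iff] at hux
        rcases hux with ⟨rfl, rfl⟩ | ⟨rfl, rfl⟩
        · exact Or.inl (Reachable.refl _)
        · exact Or.inr (Reachable.refl _)
      · exact Or.inl (hx.trans (SimpleGraph.Adj.reachable (SimpleGraph.deleteEdges_adj.mpr ⟨h.symm, fun hm => hux (by rwa [Set.mem_singleton_iff, Sym2.eq_swap] at hm)⟩)))
    · by_cases hux : s(u, x) = s(a, b)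
      · rw [Sym2.eq_iff] at hux
        rcases hux with ⟨rfl, rfl⟩ | ⟨rfl, rfl⟩
        · exact Or.inl (Reachable.refl _)
        · exact Or.inr (Reachable.refl _)
      · exact Or.inr (hx.trans (SimpleGraph.Adj.reachable (SimpleGraph.deleteEdges_adj.mpr ⟨h.symm, fun hm => hux (by rwa [Set.mem_singleton_iff, Sym2.eq_swap] at hm)⟩)))

include hG hab in
lemma side_total (u : V) :
    (G.deleteEdges {s(a, b)}).Reachable a u ∨ (G.deleteEdges {s(a, b)}).Reachable b u := by
  obtain ⟨p⟩ : G.Reachable u a := hG.isConnected.preconnected u a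
  exact side_step hG hab p (Or.inl (Reachable.refl _))

include hab ha in
lemma edge_mem_rb : s(a, b) ∈ (treePath G hG r b).edges := by
  have hd : (treePath G hG r b).dropUntil a ha = Walk.cons hab Walk.nil := by
    have : ((treePath G hG r b).dropUntil a ha).IsPath := (tp_isPath hG r b).dropUntil ha
    rw [tp_unique hG this, tp_edge hG hab]
  have := Walk.edges_dropUntil_subset (treePath G hG r b) ha
  rw [hd] at this
  exact this (by simp)

include hab ha in
lemma reach_ra : (G.deleteEdges {s(a, b)}).Reachable a r := by
  have hnr : ¬ (G.deleteEdges {s(a, b)}).Reachable r b := by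
    rw [reach_iff hG]
    simpa using edge_mem_rb hG hab ha
  rcases side_total hG hab r with h | h
  · exact h
  · exact absurd h.symm hnr

include hab ha in
lemma far_side_iff (u : V) :
    b ∈ (treePath G hG r u).support ↔ (G.deleteEdges {s(a, b)}).Reachable b u := by
  constructor
  · intro hb
    set p := treePath G hG r u with hp
    have hedges : p.edges = (p.takeUntil b hb).edges ++ (p.dropUntil b hb).edges := by
      conv_lhs => rw [← p.take_spec hb]
      exact Walk.edges_append _ _
    have hnodup : p.edges.Nodup := (tp_isPath hG r u).edges_nodup
    have hmem : s(a, b) ∈ (p.takeUntil b hb).edges := by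
      rw [takeUntil_eq hG hb]
      exact edge_mem_rb hG hab ha
    have hnot : s(a, b) ∉ (p.dropUntil b hb).edges := by
      rw [hedges] at hnodup
      exact fun hc => (List.disjoint_of_nodup_append hnodup) hmem hc
    exact ⟨(p.dropUntil b hb).toDeleteEdges {s(a, b)}
      (fun e he => by rintro rfl; exact hnot he)⟩
  · intro hb
    have hnra : ¬ (G.deleteEdges {s(a, b)}).Reachable a u := fun h =>
      not_reach_ab hG hab (h.trans hb.symm)
    have hnru : ¬ (G.deleteEdges {s(a, b)}).Reachable r u := fun h =>
      hnra ((reach_ra hG hab ha).trans h)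
    rw [reach_iff hG] at hnru
    push_neg at hnru
    exact Walk.snd_mem_support_of_mem_edges _ hnru

include hab ha in
lemma cross_iff (u v : V) :
    s(a, b) ∈ (treePath G hG u v).edges ↔
      ¬ ((b ∈ (treePath G hG r u).support) ↔ (b ∈ (treePath G hG r v).support)) := by
  have hiff : ∀ x, b ∈ (treePath G hG r x).support ↔ (G.deleteEdges {s(a, b)}).Reachable b x :=
    far_side_iff hG hab ha
  have hnr := not_reach_ab hG hab
  have hst := side_total hG hab (G := G)
  rw [← not_iff_not, not_not, ← reach_iff hG, hiff, hiff]
  constructor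
  · intro h
    exact ⟨fun hbu => hbu.trans h, fun hbv => hbv.trans h.symm⟩
  · intro h
    by_cases hbu : (G.deleteEdges {s(a, b)}).Reachable b u
    · exact hbu.symm.trans (h.mp hbu)
    · have hau : (G.deleteEdges {s(a, b)}).Reachable a u :=
        (hst u).resolve_right hbu
      have hav : (G.deleteEdges {s(a, b)}).Reachable a v :=
        (hst v).resolve_right (fun hbv => hbu (h.mpr hbv))
      exact hau.symm.trans hav
end Separation

section Children

lemma isPath_concat {u v c : V} {p : G.Walk u v} (hp : p.IsPath) (h : G.Adj v c)
    (hc : c ∉ p.support) : (p.concat h).IsPath := by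
  rw [Walk.isPath_def, Walk.support_concat, List.nodup_append]
  exact ⟨hp.support_nodup, List.nodup_singleton c,
    fun x hx y hy hxy => by rw [List.mem_singleton] at hy; subst hy; subst hxy; exact hc hx⟩

lemma child_path {r x c : V} (hxc : G.Adj x c) (hx : x ∈ (treePath G hG r c).support) :
    treePath G hG r c = (treePath G hG r x).concat hxc := by
  have h1 : (treePath G hG r c).dropUntil x hx = Walk.cons hxc Walk.nil :=
    (tp_unique hG ((tp_isPath hG r c).dropUntil hx)).trans (tp_edge hG hxc)
  conv_lhs => rw [← (treePath G hG r c).take_spec hx]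
  rw [h1, takeUntil_eq hG hx]
  rfl

lemma child_depth {r x c : V} (hxc : G.Adj x c) (hx : x ∈ (treePath G hG r c).support) :
    (treePath G hG r c).length = (treePath G hG r x).length + 1 := by
  rw [child_path hG hxc hx, Walk.length_concat]

lemma walk_cons_decomp {x u : V} (q : G.Walk x u) (hq : x ≠ u) :
    ∃ (c : V) (h : G.Adj x c) (q' : G.Walk c u), q = Walk.cons h q' := by
  cases q with
  | nil => exact absurd rfl hq
  | cons h q' => exact ⟨_, h, q', rfl⟩

/-- Existence and uniqueness of the child of `x` through which `u ≠ x` in the subtree of `x`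
is reached. -/
lemma existsUnique_child {r x u : V} (hx : x ∈ (treePath G hG r u).support) (hux : x ≠ u) :
    ∃! c : V, (G.Adj x c ∧ x ∈ (treePath G hG r c).support) ∧
      c ∈ (treePath G hG r u).support := by
  set p := treePath G hG r u with hp
  set q := p.dropUntil x hx with hq
  obtain ⟨c, h, q', hqc⟩ := walk_cons_decomp q hux
  have hsup : p.support = (p.takeUntil x hx).support ++ q.support.tail := by
    conv_lhs => rw [← p.take_spec hx]
    exact Walk.support_append _ _
  have hnodup : p.support.Nodup := (tp_isPath hG r u).support_nodup
  have hdisj := List.disjoint_of_nodup_append (hsup ▸ hnodup)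
  have hctail : c ∈ q.support.tail := by
    rw [hqc, Walk.support_cons, List.tail_cons]
    exact Walk.start_mem_support q'
  have hcq : c ∈ q.support := by
    rw [hqc, Walk.support_cons]
    exact List.mem_cons_of_mem _ (Walk.start_mem_support q')
  have hcnottake : c ∉ (p.takeUntil x hx).support := fun hmem => hdisj hmem hctail
  have hcp : c ∈ p.support := Walk.support_dropUntil_subset p hx hcq
  have hxrc : x ∈ (treePath G hG r c).support := by
    have hpath : ((treePath G hG r x).concat h).IsPath := by
      refine isPath_concat (tp_isPath hG r x) h ?_
      rwa [← takeUntil_eq hG hx]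
    rw [← tp_unique hG hpath, Walk.support_concat]
    exact List.mem_append_left _ (Walk.end_mem_support _)
  refine ⟨c, ⟨⟨h, hxrc⟩, hcp⟩, ?_⟩
  rintro c' ⟨⟨hxc', hxrc'⟩, hc'p⟩
  -- c' is not on the path to x
  have hc'nottake : c' ∉ (p.takeUntil x hx).support := by
    rw [takeUntil_eq hG hx]
    intro hmem
    exact hxc'.ne (mutual_mem hG hmem hxrc').symm
  have hc'q : c' ∈ q.support := by
    have : c' ∈ (p.takeUntil x hx).support ∨ c' ∈ q.support.tail := by
      rw [← List.mem_append, ← hsup]; exact hc'p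
    rcases this with hmem | hmem
    · exact absurd hmem hc'nottake
    · exact List.mem_of_mem_tail hmem
  -- the path from x to c' along q is the single edge
  have hqpath : q.IsPath := (tp_isPath hG r u).dropUntil hx
  have htq : q.takeUntil c' hc'q = Walk.cons hxc' Walk.nil :=
    (tp_unique hG (hqpath.takeUntil hc'q)).trans (tp_edge hG hxc')
  have hq2 : q = Walk.cons hxc' ((q.dropUntil c' hc'q)) := by
    conv_lhs => rw [← q.take_spec hc'q]
    rw [htq]
    rfl
  have := congrArg (fun (z : G.Walk x u) => z.getVert 1) (hqc.symm.trans hq2)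
  simpa [Walk.getVert_cons_succ, Walk.getVert_zero] using this.symm

end Children

section Partition

variable [Fintype V]

/-- The subtree (as a finset) rooted at `v` w.r.t. root `r`. -/
noncomputable def Tset (G : SimpleGraph V) (hG : G.IsTree) (r v : V) : Finset V :=
  Finset.univ.filter (fun u => v ∈ (treePath G hG r u).support)

lemma mem_Tset {r v u : V} : u ∈ Tset G hG r v ↔ v ∈ (treePath G hG r u).support := by
  simp [Tset]

lemma subtreeMass_eq (r v : V) (μ : V → ℝ) :
    subtreeMass G hG r v μ = ∑ u ∈ Tset G hG r v, μ u := rfl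

/-- The children of a vertex `x` w.r.t. root `r`. -/
noncomputable def children (G : SimpleGraph V) (hG : G.IsTree) (r x : V) : Finset V :=
  @Finset.filter _ (fun c => G.Adj x c ∧ x ∈ (treePath G hG r c).support)
    (fun _ => Classical.propDecidable _) Finset.univ

lemma mem_children {r x c : V} :
    c ∈ children G hG r x ↔ G.Adj x c ∧ x ∈ (treePath G hG r c).support := by
  simp [children]

lemma Tset_root (r : V) : Tset G hG r r = Finset.univ := by
  ext u
  simp [mem_Tset, Walk.start_mem_support]

lemma not_mem_Tset_child {r x c : V} (hc : c ∈ children G hG r x) : x ∉ Tset G hG r c := by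
  rw [mem_children] at hc
  rw [mem_Tset]
  intro hmem
  exact hc.1.ne (mutual_mem hG hmem hc.2).symm

lemma Tset_child_subset {r x c : V} (hc : c ∈ children G hG r x) :
    Tset G hG r c ⊆ Tset G hG r x := by
  rw [mem_children] at hc
  intro u hu
  rw [mem_Tset] at hu ⊢
  exact onPath_trans hG hu hc.2

lemma Tset_partition (r x : V) :
    Tset G hG r x = insert x ((children G hG r x).biUnion (fun c => Tset G hG r c)) := by
  ext u
  simp only [Finset.mem_insert, Finset.mem_biUnion]
  constructor
  · intro hu
    rw [mem_Tset] at hu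
    by_cases hux : x = u
    · exact Or.inl hux.symm
    · obtain ⟨c, ⟨⟨hadj, hxc⟩, hcu⟩, _⟩ := existsUnique_child hG hu hux
      exact Or.inr ⟨c, (mem_children hG).mpr ⟨hadj, hxc⟩, (mem_Tset hG).mpr hcu⟩
  · rintro (rfl | ⟨c, hc, hu⟩)
    · exact (mem_Tset hG).mpr (Walk.end_mem_support _)
    · exact Tset_child_subset hG hc hu

lemma children_pairwiseDisjoint (r x : V) :
    (↑(children G hG r x) : Set V).PairwiseDisjoint (fun c => Tset G hG r c) := by
  intro c1 hc1 c2 hc2 hne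
  simp only [Finset.coe_mem, Function.onFun] at *
  rw [Finset.disjoint_left]
  intro u hu1 hu2
  rw [Finset.mem_coe, mem_children] at hc1 hc2
  rw [mem_Tset] at hu1 hu2
  have hxu : x ∈ (treePath G hG r u).support := onPath_trans hG hu1 hc1.2
  have hux : x ≠ u := by
    rintro rfl
    exact hc1.1.ne (mutual_mem hG hu1 hc1.2).symm
  obtain ⟨c, _, huniq⟩ := existsUnique_child hG hxu hux
  exact hne ((huniq c1 ⟨⟨hc1.1, hc1.2⟩, hu1⟩).trans (huniq c2 ⟨⟨hc2.1, hc2.2⟩, hu2⟩).symm)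

lemma x_not_mem_biUnion (r x : V) :
    x ∉ (children G hG r x).biUnion (fun c => Tset G hG r c) := by
  rw [Finset.mem_biUnion]
  rintro ⟨c, hc, hx⟩
  exact not_mem_Tset_child hG hc hx

lemma sum_Tset_eq (r x : V) (f : V → ℝ) :
    ∑ u ∈ Tset G hG r x, f u
      = f x + ∑ c ∈ children G hG r x, ∑ u ∈ Tset G hG r c, f u := by
  rw [Tset_partition hG r x, Finset.sum_insert (x_not_mem_biUnion hG r x),
    Finset.sum_biUnion (children_pairwiseDisjoint hG r x)]

end Partition

section Far

variable {r : V} {far : Sym2 V → V}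
  (hfar : ∀ e ∈ G.edgeSet, ∃ a, e = s(a, far e) ∧ a ∈ (treePath G hG r (far e)).support)

include hfar in
lemma far_of_adj {x c : V} (hxc : G.Adj x c) (hx : x ∈ (treePath G hG r c).support) :
    far s(x, c) = c := by
  obtain ⟨a', hea, ha'⟩ := hfar s(x, c) hxc
  rcases Sym2.eq_iff.mp hea with ⟨rfl, hfc⟩ | ⟨hfx, rfl⟩
  · exact hfc.symm
  · refine absurd (mutual_mem hG (show c ∈ (treePath G hG r x).support by
      rw [hfx]; exact ha') hx) hxc.ne'

include hfar in
lemma exists_far_eq {x : V} (hx : x ≠ r) : ∃ e ∈ G.edgeSet, far e = x := by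
  obtain ⟨y, h, q', hq⟩ := walk_cons_decomp (treePath G hG r x).reverse hx
  have hy : y ∈ (treePath G hG r x).support := by
    have : y ∈ (treePath G hG r x).reverse.support := by
      rw [hq, Walk.support_cons]
      exact List.mem_cons_of_mem _ (Walk.start_mem_support q')
    rwa [Walk.support_reverse, List.mem_reverse] at this
  exact ⟨s(y, x), h.symm, far_of_adj hG hfar h.symm hy⟩

end Far

section Dist

variable [Fintype G.edgeSet] {r : V} {w : Sym2 V → ℝ} {far : Sym2 V → V}

/-- Indicator of `u` being in the subtree below edge `e`. -/
noncomputable def chi (G : SimpleGraph V) (hG : G.IsTree) (r : V) (far : Sym2 V → V)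
    (e : Sym2 V) (u : V) : ℝ :=
  if far e ∈ (treePath G hG r u).support then 1 else 0

variable (hfar : ∀ e ∈ G.edgeSet, ∃ a, e = s(a, far e) ∧ a ∈ (treePath G hG r (far e)).support)

include hfar in
lemma ite_eq_chi {e : Sym2 V} (he : e ∈ G.edgeFinset) (u v : V) :
    (if e ∈ (treePath G hG u v).edges then w e else 0)
      = w e * |chi G hG r far e u - chi G hG r far e v| := by
  rw [SimpleGraph.mem_edgeFinset] at he
  obtain ⟨a, hea, ha⟩ := hfar e he
  have hab : G.Adj a (far e) := by rw [← SimpleGraph.mem_edgeSet, ← hea]; exact he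
  have hcross := cross_iff hG hab ha u v
  rw [← hea] at hcross
  unfold chi
  by_cases h1 : far e ∈ (treePath G hG r u).support <;>
    by_cases h2 : far e ∈ (treePath G hG r v).support <;>
      simp [h1, h2, hcross, iff_iff_implies_and_implies] <;> ring

include hfar in
lemma dist_formula (u v : V) :
    treeDist G hG w u v
      = ∑ e ∈ G.edgeFinset, w e * |chi G hG r far e u - chi G hG r far e v| := by
  have h1 : treeDist G hG w u v = ∑ e ∈ (treePath G hG u v).edges.toFinset, w e :=
    (List.sum_toFinset _ (tp_isPath hG u v).edges_nodup).symm
  have h2 : (treePath G hG u v).edges.toFinset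
      = G.edgeFinset.filter (fun e => e ∈ (treePath G hG u v).edges) := by
    ext e
    simp only [List.mem_toFinset, Finset.mem_filter, SimpleGraph.mem_edgeFinset]
    exact ⟨fun h => ⟨(treePath G hG u v).edges_subset_edgeSet h, h⟩, fun h => h.2⟩
  rw [h1, h2, Finset.sum_filter]
  exact Finset.sum_congr rfl (fun e he => ite_eq_chi hG hfar he u v)

lemma dist_self (u : V) : treeDist G hG w u u = 0 := by
  unfold treeDist
  rw [tp_self hG]
  simp

lemma dist_adj {x c : V} (h : G.Adj x c) : treeDist G hG w x c = w s(x, c) := by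
  unfold treeDist
  rw [tp_edge hG h]
  simp

include hfar in
lemma dist_triangle (hw : ∀ e ∈ G.edgeSet, 0 ≤ w e) (x y z : V) :
    treeDist G hG w x z ≤ treeDist G hG w x y + treeDist G hG w y z := by
  rw [dist_formula hG hfar, dist_formula hG hfar, dist_formula hG hfar, ← Finset.sum_add_distrib]
  refine Finset.sum_le_sum (fun e he => ?_)
  rw [← mul_add]
  refine mul_le_mul_of_nonneg_left ?_ (hw e (SimpleGraph.mem_edgeFinset.mp he))
  exact abs_sub_le _ _ _

end Dist

section Reroute

variable {X : Type*} [Fintype X] [DecidableEq X]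

lemma reroute {μ' ρ : X → ℝ} {P : X × X → ℝ}
    (hP : IsCoupling μ' ρ P) (D : X × X → ℝ) {b a : X} (hba : b ≠ a) {m c : ℝ}
    (hm : 0 < m) (hma : m ≤ μ' a) (htri : ∀ v, D (b, v) ≤ c + D (a, v)) :
    ∃ Q, IsCoupling (fun x => μ' x + (if x = b then m else 0) - (if x = a then m else 0)) ρ Q ∧
      ∑ x, ∑ y, Q (x, y) * D (x, y) ≤ (∑ x, ∑ y, P (x, y) * D (x, y)) + m * c := by
  obtain ⟨hP0, hPcol, hProw⟩ := hP
  have hμa : 0 < μ' a := hm.trans_le hma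
  set t : X → ℝ := fun y => (m / μ' a) * P (a, y) with ht_def
  have ht0 : ∀ y, 0 ≤ t y := fun y =>
    mul_nonneg (div_nonneg hm.le hμa.le) (hP0 (a, y))
  have ht1 : ∀ y, t y ≤ P (a, y) := fun y => by
    rw [ht_def]
    calc (m / μ' a) * P (a, y) ≤ 1 * P (a, y) := by
          exact mul_le_mul_of_nonneg_right ((div_le_one hμa).mpr hma) (hP0 (a, y))
      _ = P (a, y) := one_mul _
  have htsum : ∑ y, t y = m := by
    rw [ht_def, ← Finset.mul_sum, hProw a, div_mul_cancel₀ _ hμa.ne']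
  refine ⟨fun p => P p + (if p.1 = b then t p.2 else 0) - (if p.1 = a then t p.2 else 0),
    ⟨?_, ?_, ?_⟩, ?_⟩
  · rintro ⟨x, y⟩
    dsimp only
    rcases eq_or_ne x b with rfl | hxb
    · rw [if_pos rfl, if_neg hba]
      have := hP0 (x, y); have := ht0 y; linarith
    · rcases eq_or_ne x a with rfl | hxa
      · rw [if_neg hxb, if_pos rfl]
        have := ht1 y; linarith
      · rw [if_neg hxb, if_neg hxa]
        have := hP0 (x, y); linarith
  · intro y
    dsimp only
    rw [Finset.sum_sub_distrib, Finset.sum_add_distrib, hPcol y,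
      Finset.sum_ite_eq' Finset.univ b (fun _ => t y),
      Finset.sum_ite_eq' Finset.univ a (fun _ => t y)]
    simp
  · intro x
    dsimp only
    rw [Finset.sum_sub_distrib, Finset.sum_add_distrib, hProw x]
    rcases eq_or_ne x b with rfl | hxb
    · simp [hba, htsum]
    · rcases eq_or_ne x a with rfl | hxa
      · simp [hxb, htsum]
      · simp [hxb, hxa]
  · have hexp : ∀ x y, (P (x, y) + (if x = b then t y else 0) - (if x = a then t y else 0))
        * D (x, y) = P (x, y) * D (x, y) + (if x = b then t y * D (x, y) else 0)
          - (if x = a then t y * D (x, y) else 0) := by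
      intro x y
      split_ifs <;> ring
    have hsum1 : ∀ (z : X), ∑ x : X, ∑ y : X, (if x = z then t y * D (x, y) else 0)
        = ∑ y : X, t y * D (z, y) := by
      intro z
      rw [Finset.sum_eq_single z]
      · simp
      · intro x _ hxz
        simp [hxz]
      · simp
    calc ∑ x, ∑ y, (P (x, y) + (if x = b then t y else 0) - (if x = a then t y else 0)) * D (x, y)
        = (∑ x, ∑ y, P (x, y) * D (x, y)) + (∑ y, t y * D (b, y)) - (∑ y, t y * D (a, y)) := by
          simp only [hexp, Finset.sum_sub_distrib, Finset.sum_add_distrib]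
          rw [hsum1 b, hsum1 a]
      _ ≤ (∑ x, ∑ y, P (x, y) * D (x, y)) + (∑ y, t y * (c + D (a, y)))
            - (∑ y, t y * D (a, y)) := by
          have : (∑ y, t y * D (b, y)) ≤ ∑ y, t y * (c + D (a, y)) :=
            Finset.sum_le_sum (fun y _ => mul_le_mul_of_nonneg_left (htri y) (ht0 y))
          linarith
      _ = (∑ x, ∑ y, P (x, y) * D (x, y)) + m * c := by
          have : (∑ y, t y * (c + D (a, y)))
              = (∑ y, t y) * c + ∑ y, t y * D (a, y) := by
            rw [Finset.sum_mul, ← Finset.sum_add_distrib]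
            exact Finset.sum_congr rfl (fun y _ => by ring)
          rw [this, htsum]
          ring

lemma coupling_symm {μ ρ : X → ℝ} {P : X × X → ℝ} (hP : IsCoupling μ ρ P) :
    IsCoupling ρ μ (fun p => P (p.2, p.1)) :=
  ⟨fun p => hP.1 _, fun y => hP.2.2 y, fun x => hP.2.1 x⟩

lemma cost_symm (P D : X × X → ℝ) :
    ∑ x, ∑ y, (P (y, x)) * D (y, x) = ∑ x, ∑ y, P (x, y) * D (x, y) :=
  Finset.sum_comm

end Reroute

section Bounds

variable [Fintype V] [Fintype G.edgeSet] {r : V} {w : Sym2 V → ℝ} {far : Sym2 V → V}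
  (hfar : ∀ e ∈ G.edgeSet, ∃ a, e = s(a, far e) ∧ a ∈ (treePath G hG r (far e)).support)
  (hw : ∀ e ∈ G.edgeSet, 0 ≤ w e)

lemma subtreeMass_chi (e : Sym2 V) (μ : V → ℝ) :
    subtreeMass G hG r (far e) μ = ∑ u, chi G hG r far e u * μ u := by
  unfold subtreeMass chi
  rw [Finset.sum_filter]
  exact Finset.sum_congr rfl (fun u _ => by split_ifs <;> simp)

include hfar hw in
lemma LB {μ ρ : V → ℝ} {P : V × V → ℝ} (hP : IsCoupling μ ρ P) :
    ∑ e ∈ G.edgeFinset, w e * |subtreeMass G hG r (far e) μ - subtreeMass G hG r (far e) ρ|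
      ≤ ∑ x, ∑ y, P (x, y) * treeDist G hG w x y := by
  obtain ⟨hP0, hPcol, hProw⟩ := hP
  have hswap : ∑ x, ∑ y, P (x, y) * treeDist G hG w x y
      = ∑ e ∈ G.edgeFinset, ∑ x, ∑ y,
          P (x, y) * (w e * |chi G hG r far e x - chi G hG r far e y|) := by
    have h1 : ∀ x y : V, P (x, y) * treeDist G hG w x y
        = ∑ e ∈ G.edgeFinset,
            P (x, y) * (w e * |chi G hG r far e x - chi G hG r far e y|) := by
      intro x y
      rw [dist_formula hG hfar, Finset.mul_sum]
    simp only [h1]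
    calc ∑ x : V, ∑ y : V, ∑ e ∈ G.edgeFinset,
            P (x, y) * (w e * |chi G hG r far e x - chi G hG r far e y|)
        = ∑ x : V, ∑ e ∈ G.edgeFinset, ∑ y : V,
            P (x, y) * (w e * |chi G hG r far e x - chi G hG r far e y|) :=
          Finset.sum_congr rfl (fun x _ => Finset.sum_comm)
      _ = ∑ e ∈ G.edgeFinset, ∑ x : V, ∑ y : V,
            P (x, y) * (w e * |chi G hG r far e x - chi G hG r far e y|) :=
          Finset.sum_comm
  rw [hswap]
  refine Finset.sum_le_sum (fun e he => ?_)
  have hΔ : subtreeMass G hG r (far e) μ - subtreeMass G hG r (far e) ρ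
      = ∑ x, ∑ y, P (x, y) * (chi G hG r far e x - chi G hG r far e y) := by
    rw [subtreeMass_chi hG, subtreeMass_chi hG]
    have hμe : ∀ x, chi G hG r far e x * μ x = ∑ y, P (x, y) * chi G hG r far e x := by
      intro x
      rw [← Finset.sum_mul, hProw x]
      ring
    have hρe : ∀ y, chi G hG r far e y * ρ y = ∑ x, P (x, y) * chi G hG r far e y := by
      intro y
      rw [← Finset.sum_mul, hPcol y]
      ring
    simp only [hμe, hρe]
    have hc : ∑ y : V, ∑ x : V, P (x, y) * chi G hG r far e y
        = ∑ x : V, ∑ y : V, P (x, y) * chi G hG r far e y := Finset.sum_comm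
    rw [hc, ← Finset.sum_sub_distrib]
    refine Finset.sum_congr rfl (fun x _ => ?_)
    rw [← Finset.sum_sub_distrib]
    exact Finset.sum_congr rfl (fun y _ => by ring)
  have habs : |subtreeMass G hG r (far e) μ - subtreeMass G hG r (far e) ρ|
      ≤ ∑ x, ∑ y, P (x, y) * |chi G hG r far e x - chi G hG r far e y| := by
    rw [hΔ]
    refine (Finset.abs_sum_le_sum_abs _ _).trans (Finset.sum_le_sum (fun x _ => ?_))
    refine (Finset.abs_sum_le_sum_abs _ _).trans (Finset.sum_le_sum (fun y _ => ?_))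
    rw [abs_mul, abs_of_nonneg (hP0 (x, y))]
  calc w e * |subtreeMass G hG r (far e) μ - subtreeMass G hG r (far e) ρ|
      ≤ w e * ∑ x, ∑ y, P (x, y) * |chi G hG r far e x - chi G hG r far e y| :=
        mul_le_mul_of_nonneg_left habs (hw e (SimpleGraph.mem_edgeFinset.mp he))
    _ = ∑ x, ∑ y, P (x, y) * (w e * |chi G hG r far e x - chi G hG r far e y|) := by
        rw [Finset.mul_sum]
        refine Finset.sum_congr rfl (fun x _ => ?_)
        rw [Finset.mul_sum]
        exact Finset.sum_congr rfl (fun y _ => by ring)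

end Bounds

section UB

variable [Fintype V] [Fintype G.edgeSet] {r : V} {w : Sym2 V → ℝ} {far : Sym2 V → V}
  (hfar : ∀ e ∈ G.edgeSet, ∃ a, e = s(a, far e) ∧ a ∈ (treePath G hG r (far e)).support)
  (hw : ∀ e ∈ G.edgeSet, 0 ≤ w e)

lemma sum_shift {X : Type*} [DecidableEq X] (s : Finset X) (f : X → ℝ) (a b : X) (m : ℝ) :
    ∑ u ∈ s, (f u + (if u = a then m else 0) - (if u = b then m else 0))
      = (∑ u ∈ s, f u) + (if a ∈ s then m else 0) - (if b ∈ s then m else 0) := by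
  rw [Finset.sum_sub_distrib, Finset.sum_add_distrib,
    Finset.sum_ite_eq' s a (fun _ => m), Finset.sum_ite_eq' s b (fun _ => m)]

include hfar in
lemma all_eq {μ ρ : V → ℝ} (hμ : IsProbVector μ) (hρ : IsProbVector ρ)
    (h : ∀ e ∈ G.edgeFinset, subtreeMass G hG r (far e) μ = subtreeMass G hG r (far e) ρ) :
    μ = ρ := by
  have hT : ∀ x : V, ∑ u ∈ Tset G hG r x, μ u = ∑ u ∈ Tset G hG r x, ρ u := by
    intro x
    rcases eq_or_ne x r with rfl | hxr
    · rw [Tset_root hG]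
      rw [hμ.2, hρ.2]
    · obtain ⟨e, he, hfe⟩ := exists_far_eq hG hfar hxr
      have := h e (SimpleGraph.mem_edgeFinset.mpr he)
      rw [subtreeMass_eq hG, subtreeMass_eq hG, hfe] at this
      exact this
  funext x
  have h1 := sum_Tset_eq hG r x μ
  have h2 := sum_Tset_eq hG r x ρ
  have h3 : ∑ c ∈ children G hG r x, ∑ u ∈ Tset G hG r c, μ u
      = ∑ c ∈ children G hG r x, ∑ u ∈ Tset G hG r c, ρ u :=
    Finset.sum_congr rfl (fun c _ => hT c)
  have := hT x
  rw [h1, h2, h3] at this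
  linarith

lemma diag_coupling {μ : V → ℝ} (hμ : IsProbVector μ) :
    IsCoupling μ μ (fun p => if p.1 = p.2 then μ p.1 else 0) := by
  refine ⟨fun p => ?_, fun y => ?_, fun x => ?_⟩
  · by_cases h : p.1 = p.2 <;> simp [h]
    exact hμ.1 _
  · have h1 : ∀ x : V, (fun p : V × V => if p.1 = p.2 then μ p.1 else 0) (x, y)
        = (if x = y then μ y else 0) := by
      intro x; by_cases h : x = y <;> simp [h]
    rw [Finset.sum_congr rfl (fun x _ => h1 x),
      Finset.sum_ite_eq' Finset.univ y (fun _ => μ y)]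
    simp
  · have h1 : ∀ y : V, (fun p : V × V => if p.1 = p.2 then μ p.1 else 0) (x, y)
        = (if y = x then μ x else 0) := by
      intro y
      by_cases h : x = y
      · simp [h]
      · rw [if_neg (fun hh : y = x => h hh.symm)]
        simp [h]
    rw [Finset.sum_congr rfl (fun y _ => h1 y),
      Finset.sum_ite_eq' Finset.univ x (fun _ => μ x)]
    simp

lemma diag_cost (μ : V → ℝ) :
    ∑ x, ∑ y, (if x = y then μ x else 0) * treeDist G hG w x y = 0 := by
  refine Finset.sum_eq_zero (fun x _ => Finset.sum_eq_zero (fun y _ => ?_))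
  split_ifs with h
  · subst h
    rw [dist_self hG, mul_zero]
  · rw [zero_mul]

end UB

section UBmain

variable [Fintype V] [Fintype G.edgeSet] {r : V} {w : Sym2 V → ℝ} {far : Sym2 V → V}
  (hfar : ∀ e ∈ G.edgeSet, ∃ a, e = s(a, far e) ∧ a ∈ (treePath G hG r (far e)).support)
  (hw : ∀ e ∈ G.edgeSet, 0 ≤ w e)

include hfar hw in
lemma UB (n : ℕ) : ∀ (μ ρ : V → ℝ), IsProbVector μ → IsProbVector ρ →
    (G.edgeFinset.filter
      (fun e => subtreeMass G hG r (far e) μ ≠ subtreeMass G hG r (far e) ρ)).card ≤ n →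
    ∃ P, IsCoupling μ ρ P ∧
      ∑ x, ∑ y, P (x, y) * treeDist G hG w x y
        ≤ ∑ e ∈ G.edgeFinset,
            w e * |subtreeMass G hG r (far e) μ - subtreeMass G hG r (far e) ρ| := by
  induction n with
  | zero =>
    intro μ ρ hμ hρ hcard
    have hall : ∀ e ∈ G.edgeFinset,
        subtreeMass G hG r (far e) μ = subtreeMass G hG r (far e) ρ := by
      intro e he
      by_contra hne
      have : e ∈ G.edgeFinset.filter
          (fun e => subtreeMass G hG r (far e) μ ≠ subtreeMass G hG r (far e) ρ) :=
        Finset.mem_filter.mpr ⟨he, hne⟩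
      have := Finset.card_pos.mpr ⟨e, this⟩
      omega
    have hμρ : μ = ρ := all_eq hG hfar hμ hρ hall
    subst hμρ
    refine ⟨_, diag_coupling hμ, ?_⟩
    rw [diag_cost hG]
    refine Finset.sum_nonneg (fun e he => ?_)
    have := hall e he
    rw [this]
    simp
  | succ n ih =>
    intro μ ρ hμ hρ hcard
    set N := G.edgeFinset.filter
      (fun e => subtreeMass G hG r (far e) μ ≠ subtreeMass G hG r (far e) ρ) with hN
    rcases Finset.eq_empty_or_nonempty N with hemp | hne
    · have hall : ∀ e ∈ G.edgeFinset,
          subtreeMass G hG r (far e) μ = subtreeMass G hG r (far e) ρ := by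
        intro e he
        by_contra hne
        have : e ∈ N := Finset.mem_filter.mpr ⟨he, hne⟩
        rw [hemp] at this
        exact absurd this (Finset.notMem_empty e)
      have hμρ : μ = ρ := all_eq hG hfar hμ hρ hall
      subst hμρ
      refine ⟨_, diag_coupling hμ, ?_⟩
      rw [diag_cost hG]
      refine Finset.sum_nonneg (fun e he => ?_)
      rw [hall e he]
      simp
    · obtain ⟨estar, heN, hmax⟩ :=
        N.exists_max_image (fun e => (treePath G hG r (far e)).length) hne
      have heE : estar ∈ G.edgeFinset := (Finset.mem_filter.mp heN).1
      have hΔne : subtreeMass G hG r (far estar) μ ≠ subtreeMass G hG r (far estar) ρ :=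
        (Finset.mem_filter.mp heN).2
      obtain ⟨a, hea, ha⟩ := hfar estar (SimpleGraph.mem_edgeFinset.mp heE)
      have hab : G.Adj a (far estar) := by
        rw [← SimpleGraph.mem_edgeSet, ← hea]
        exact SimpleGraph.mem_edgeFinset.mp heE
      -- all children subtrees of `far estar` are balanced
      have hchild0 : ∀ c ∈ children G hG r (far estar),
          ∑ u ∈ Tset G hG r c, μ u = ∑ u ∈ Tset G hG r c, ρ u := by
        intro c hcmem
        rw [mem_children hG] at hcmem
        have hfc : far s(far estar, c) = c := far_of_adj hG hfar hcmem.1 hcmem.2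
        by_contra hne2
        have hmem : s(far estar, c) ∈ N := by
          refine Finset.mem_filter.mpr ⟨SimpleGraph.mem_edgeFinset.mpr hcmem.1, ?_⟩
          rw [hfc, subtreeMass_eq hG, subtreeMass_eq hG]
          exact hne2
        have hle := hmax _ hmem
        rw [hfc, child_depth hG hcmem.1 hcmem.2] at hle
        omega
      have hkey : μ (far estar) - ρ (far estar)
          = subtreeMass G hG r (far estar) μ - subtreeMass G hG r (far estar) ρ := by
        have h1 := sum_Tset_eq hG r (far estar) μ
        have h2 := sum_Tset_eq hG r (far estar) ρ
        have h3 : ∑ c ∈ children G hG r (far estar), ∑ u ∈ Tset G hG r c, μ u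
            = ∑ c ∈ children G hG r (far estar), ∑ u ∈ Tset G hG r c, ρ u :=
          Finset.sum_congr rfl (fun c hc => hchild0 c hc)
        rw [subtreeMass_eq hG, subtreeMass_eq hG, h1, h2, h3]
        ring
      set Δs := subtreeMass G hG r (far estar) μ - subtreeMass G hG r (far estar) ρ with hΔs
      have hΔs0 : Δs ≠ 0 := sub_ne_zero.mpr hΔne
      have hbT : far estar ∈ (treePath G hG r (far estar)).support := Walk.end_mem_support _
      have haT : far estar ∉ (treePath G hG r a).support := fun hmem =>
        hab.ne (mutual_mem hG ha hmem)
      have hsame : ∀ e ∈ G.edgeFinset, e ≠ estar →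
          ((far e ∈ (treePath G hG r a).support)
            ↔ (far e ∈ (treePath G hG r (far estar)).support)) := by
        intro e he hne2
        obtain ⟨ae, heae, hae⟩ := hfar e (SimpleGraph.mem_edgeFinset.mp he)
        have habe : G.Adj ae (far e) := by
          rw [← SimpleGraph.mem_edgeSet, ← heae]
          exact SimpleGraph.mem_edgeFinset.mp he
        have hcr := cross_iff hG habe hae a (far estar)
        rw [← heae] at hcr
        have hnot : e ∉ (treePath G hG a (far estar)).edges := by
          rw [tp_edge hG hab]
          simp only [Walk.edges_cons, Walk.edges_nil, List.mem_singleton]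
          rw [← hea]
          exact hne2
        exact not_not.mp (fun hni => hnot (hcr.mpr hni))
      -- sums after shifting mass m from far estar to a (or conversely)
      have hshift : ∀ (f : V → ℝ) (m : ℝ) (v : V),
          subtreeMass G hG r v
              (fun x => f x + (if x = a then m else 0) - (if x = far estar then m else 0))
            = subtreeMass G hG r v f
              + (if v ∈ (treePath G hG r a).support then m else 0)
              - (if v ∈ (treePath G hG r (far estar)).support then m else 0) := by
        intro f m v
        rw [subtreeMass_eq hG, subtreeMass_eq hG, sum_shift]
        have e1 : (if a ∈ Tset G hG r v then m else 0)
            = (if v ∈ (treePath G hG r a).support then m else 0) := by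
          by_cases h : a ∈ Tset G hG r v
          · rw [if_pos h, if_pos ((mem_Tset hG).mp h)]
          · rw [if_neg h, if_neg (fun hc => h ((mem_Tset hG).mpr hc))]
        have e2 : (if far estar ∈ Tset G hG r v then m else 0)
            = (if v ∈ (treePath G hG r (far estar)).support then m else 0) := by
          by_cases h : far estar ∈ Tset G hG r v
          · rw [if_pos h, if_pos ((mem_Tset hG).mp h)]
          · rw [if_neg h, if_neg (fun hc => h ((mem_Tset hG).mpr hc))]
        rw [e1, e2]
      rcases hΔs0.lt_or_gt with hneg | hpos
      · -- Δs < 0 : shift mass on the ρ side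
        set ρ' : V → ℝ := fun x => ρ x + (if x = a then -Δs else 0)
          - (if x = far estar then -Δs else 0) with hρ'def
        have hρ'b : ρ' (far estar) = μ (far estar) := by
          rw [hρ'def]
          dsimp only
          rw [if_neg (fun h : far estar = a => hab.ne' h), if_pos rfl]
          linarith
        have hρ'a : ρ' a = ρ a - Δs := by
          rw [hρ'def]
          dsimp only
          rw [if_pos rfl, if_neg (fun h : a = far estar => hab.ne h)]
          ring
        have hρ'prob : IsProbVector ρ' := by
          constructor
          · intro x
            rcases eq_or_ne x a with rfl | hxa
            · rw [hρ'a]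
              have := hρ.1 x
              linarith
            · rcases eq_or_ne x (far estar) with rfl | hxb
              · rw [hρ'b]
                exact hμ.1 _
              · rw [hρ'def]
                dsimp only
                rw [if_neg hxa, if_neg hxb]
                have := hρ.1 x
                linarith
          · rw [hρ'def, sum_shift]
            simp [hρ.2]
        have hsub' : ∀ v, subtreeMass G hG r v ρ'
            = subtreeMass G hG r v ρ
              + (if v ∈ (treePath G hG r a).support then -Δs else 0)
              - (if v ∈ (treePath G hG r (far estar)).support then -Δs else 0) := by
          intro v
          rw [hρ'def]
          exact hshift ρ (-Δs) v
        have hΔ'star : subtreeMass G hG r (far estar) μ = subtreeMass G hG r (far estar) ρ' := by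
          rw [hsub', if_neg haT, if_pos hbT]
          linarith
        have hΔ'eq : ∀ e ∈ G.edgeFinset, e ≠ estar →
            subtreeMass G hG r (far e) ρ' = subtreeMass G hG r (far e) ρ := by
          intro e he hne2
          rw [hsub']
          by_cases hmem : far e ∈ (treePath G hG r (far estar)).support
          · rw [if_pos ((hsame e he hne2).mpr hmem), if_pos hmem]
            ring
          · rw [if_neg (fun hc => hmem ((hsame e he hne2).mp hc)), if_neg hmem]
            ring
        have hcard' : (G.edgeFinset.filter
            (fun e => subtreeMass G hG r (far e) μ ≠ subtreeMass G hG r (far e) ρ')).card ≤ n := by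
          have hsubset : G.edgeFinset.filter
              (fun e => subtreeMass G hG r (far e) μ ≠ subtreeMass G hG r (far e) ρ')
                ⊆ N.erase estar := by
            intro e hemem
            rw [Finset.mem_filter] at hemem
            have hne2 : e ≠ estar := by
              rintro rfl
              exact hemem.2 hΔ'star
            refine Finset.mem_erase.mpr ⟨hne2, Finset.mem_filter.mpr ⟨hemem.1, ?_⟩⟩
            rw [← hΔ'eq e hemem.1 hne2]
            exact hemem.2
          have h1 := Finset.card_le_card hsubset
          have h2 := Finset.card_erase_of_mem heN
          have h3 : 1 ≤ N.card := Finset.card_pos.mpr ⟨estar, heN⟩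
          omega
        obtain ⟨P', hP', hcost'⟩ := ih μ ρ' hμ hρ'prob hcard'
        -- transpose, reroute, transpose back
        have hPt : IsCoupling ρ' μ (fun p => P' (p.2, p.1)) := coupling_symm hP'
        have hma : -Δs ≤ ρ' a := by
          rw [hρ'a]
          have := hρ.1 a
          linarith
        have htri : ∀ v, (fun p : V × V => treeDist G hG w p.2 p.1) (far estar, v)
            ≤ w estar + (fun p : V × V => treeDist G hG w p.2 p.1) (a, v) := by
          intro v
          dsimp only
          have h1 := dist_triangle hG hfar hw v a (far estar)
          have h2 : treeDist G hG w a (far estar) = w estar := by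
            rw [dist_adj hG hab, ← hea]
          linarith
        obtain ⟨Q', hQ', hQ'cost⟩ := reroute hPt (fun p : V × V => treeDist G hG w p.2 p.1)
          hab.ne' (by linarith : (0:ℝ) < -Δs) hma htri
        have hQρ : (fun x => ρ' x + (if x = far estar then -Δs else 0)
            - (if x = a then -Δs else 0)) = ρ := by
          funext x
          rw [hρ'def]
          dsimp only
          ring
        rw [hQρ] at hQ'
        refine ⟨fun p => Q' (p.2, p.1), coupling_symm hQ', ?_⟩
        have hQ'cost' : ∑ x : V, ∑ y : V, Q' (x, y) * treeDist G hG w y x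
            ≤ (∑ x : V, ∑ y : V, P' (y, x) * treeDist G hG w y x) + (-Δs) * w estar := by
          simpa using hQ'cost
        have hswap1 : ∑ x : V, ∑ y : V, Q' (y, x) * treeDist G hG w x y
            = ∑ x : V, ∑ y : V, Q' (x, y) * treeDist G hG w y x := Finset.sum_comm
        have hswap2 : ∑ x : V, ∑ y : V, P' (y, x) * treeDist G hG w y x
            = ∑ x : V, ∑ y : V, P' (x, y) * treeDist G hG w x y := Finset.sum_comm
        -- combine the sums
        have hsplit1 : ∑ e ∈ G.edgeFinset,
            w e * |subtreeMass G hG r (far e) μ - subtreeMass G hG r (far e) ρ'|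
              = w estar * |subtreeMass G hG r (far estar) μ - subtreeMass G hG r (far estar) ρ'|
                + ∑ e ∈ G.edgeFinset.erase estar,
                    w e * |subtreeMass G hG r (far e) μ - subtreeMass G hG r (far e) ρ'| :=
          (Finset.add_sum_erase _ _ heE).symm
        have hsplit2 : ∑ e ∈ G.edgeFinset,
            w e * |subtreeMass G hG r (far e) μ - subtreeMass G hG r (far e) ρ|
              = w estar * |subtreeMass G hG r (far estar) μ - subtreeMass G hG r (far estar) ρ|
                + ∑ e ∈ G.edgeFinset.erase estar,
                    w e * |subtreeMass G hG r (far e) μ - subtreeMass G hG r (far e) ρ| :=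
          (Finset.add_sum_erase _ _ heE).symm
        have herase : ∑ e ∈ G.edgeFinset.erase estar,
            w e * |subtreeMass G hG r (far e) μ - subtreeMass G hG r (far e) ρ'|
              = ∑ e ∈ G.edgeFinset.erase estar,
                  w e * |subtreeMass G hG r (far e) μ - subtreeMass G hG r (far e) ρ| := by
          refine Finset.sum_congr rfl (fun e he => ?_)
          rw [hΔ'eq e (Finset.mem_of_mem_erase he) (Finset.ne_of_mem_erase he)]
        have hzero : |subtreeMass G hG r (far estar) μ - subtreeMass G hG r (far estar) ρ'|
            = 0 := by
          rw [hΔ'star]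
          simp
        have habs : |subtreeMass G hG r (far estar) μ - subtreeMass G hG r (far estar) ρ|
            = -Δs := by
          rw [← hΔs, abs_of_neg hneg]
        have hwpos : 0 ≤ w estar := hw estar (SimpleGraph.mem_edgeFinset.mp heE)
        calc ∑ x, ∑ y, Q' (y, x) * treeDist G hG w x y
            ≤ (∑ x : V, ∑ y : V, P' (x, y) * treeDist G hG w x y) + (-Δs) * w estar := by
              rw [hswap1, ← hswap2]
              exact hQ'cost'
          _ ≤ (∑ e ∈ G.edgeFinset,
                w e * |subtreeMass G hG r (far e) μ - subtreeMass G hG r (far e) ρ'|)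
                + (-Δs) * w estar := by linarith
          _ ≤ ∑ e ∈ G.edgeFinset,
                w e * |subtreeMass G hG r (far e) μ - subtreeMass G hG r (far e) ρ| := by
              rw [hsplit1, hsplit2, herase, hzero, habs]
              nlinarith [hwpos]
      · -- 0 < Δs : shift mass on the μ side
        set μ' : V → ℝ := fun x => μ x + (if x = a then Δs else 0)
          - (if x = far estar then Δs else 0) with hμ'def
        have hμ'b : μ' (far estar) = ρ (far estar) := by
          rw [hμ'def]
          dsimp only
          rw [if_neg (fun h : far estar = a => hab.ne' h), if_pos rfl]
          linarith
        have hμ'a : μ' a = μ a + Δs := by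
          rw [hμ'def]
          dsimp only
          rw [if_pos rfl, if_neg (fun h : a = far estar => hab.ne h)]
          ring
        have hμ'prob : IsProbVector μ' := by
          constructor
          · intro x
            rcases eq_or_ne x a with rfl | hxa
            · rw [hμ'a]
              have := hμ.1 x
              linarith
            · rcases eq_or_ne x (far estar) with rfl | hxb
              · rw [hμ'b]
                exact hρ.1 _
              · rw [hμ'def]
                dsimp only
                rw [if_neg hxa, if_neg hxb]
                have := hμ.1 x
                linarith
          · rw [hμ'def, sum_shift]
            simp [hμ.2]
        have hsub' : ∀ v, subtreeMass G hG r v μ'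
            = subtreeMass G hG r v μ
              + (if v ∈ (treePath G hG r a).support then Δs else 0)
              - (if v ∈ (treePath G hG r (far estar)).support then Δs else 0) := by
          intro v
          rw [hμ'def]
          exact hshift μ Δs v
        have hΔ'star : subtreeMass G hG r (far estar) μ' = subtreeMass G hG r (far estar) ρ := by
          rw [hsub', if_neg haT, if_pos hbT]
          linarith
        have hΔ'eq : ∀ e ∈ G.edgeFinset, e ≠ estar →
            subtreeMass G hG r (far e) μ' = subtreeMass G hG r (far e) μ := by
          intro e he hne2
          rw [hsub']
          by_cases hmem : far e ∈ (treePath G hG r (far estar)).support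
          · rw [if_pos ((hsame e he hne2).mpr hmem), if_pos hmem]
            ring
          · rw [if_neg (fun hc => hmem ((hsame e he hne2).mp hc)), if_neg hmem]
            ring
        have hcard' : (G.edgeFinset.filter
            (fun e => subtreeMass G hG r (far e) μ' ≠ subtreeMass G hG r (far e) ρ)).card ≤ n := by
          have hsubset : G.edgeFinset.filter
              (fun e => subtreeMass G hG r (far e) μ' ≠ subtreeMass G hG r (far e) ρ)
                ⊆ N.erase estar := by
            intro e hemem
            rw [Finset.mem_filter] at hemem
            have hne2 : e ≠ estar := by
              rintro rfl
              exact hemem.2 hΔ'star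
            refine Finset.mem_erase.mpr ⟨hne2, Finset.mem_filter.mpr ⟨hemem.1, ?_⟩⟩
            rw [← hΔ'eq e hemem.1 hne2]
            exact hemem.2
          have h1 := Finset.card_le_card hsubset
          have h2 := Finset.card_erase_of_mem heN
          have h3 : 1 ≤ N.card := Finset.card_pos.mpr ⟨estar, heN⟩
          omega
        obtain ⟨P', hP', hcost'⟩ := ih μ' ρ hμ'prob hρ hcard'
        have hma : Δs ≤ μ' a := by
          rw [hμ'a]
          have := hμ.1 a
          linarith
        have htri : ∀ v, (fun p : V × V => treeDist G hG w p.1 p.2) (far estar, v)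
            ≤ w estar + (fun p : V × V => treeDist G hG w p.1 p.2) (a, v) := by
          intro v
          dsimp only
          have h1 := dist_triangle hG hfar hw (far estar) a v
          have h2 : treeDist G hG w (far estar) a = w estar := by
            rw [dist_adj hG hab.symm, Sym2.eq_swap, ← hea]
          linarith
        obtain ⟨Q, hQ, hQcost⟩ := reroute hP' (fun p : V × V => treeDist G hG w p.1 p.2)
          hab.ne' hpos hma htri
        have hQμ : (fun x => μ' x + (if x = far estar then Δs else 0)
            - (if x = a then Δs else 0)) = μ := by
          funext x
          rw [hμ'def]
          dsimp only
          ring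
        rw [hQμ] at hQ
        refine ⟨Q, hQ, ?_⟩
        have hsplit1 : ∑ e ∈ G.edgeFinset,
            w e * |subtreeMass G hG r (far e) μ' - subtreeMass G hG r (far e) ρ|
              = w estar * |subtreeMass G hG r (far estar) μ' - subtreeMass G hG r (far estar) ρ|
                + ∑ e ∈ G.edgeFinset.erase estar,
                    w e * |subtreeMass G hG r (far e) μ' - subtreeMass G hG r (far e) ρ| :=
          (Finset.add_sum_erase _ _ heE).symm
        have hsplit2 : ∑ e ∈ G.edgeFinset,
            w e * |subtreeMass G hG r (far e) μ - subtreeMass G hG r (far e) ρ|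
              = w estar * |subtreeMass G hG r (far estar) μ - subtreeMass G hG r (far estar) ρ|
                + ∑ e ∈ G.edgeFinset.erase estar,
                    w e * |subtreeMass G hG r (far e) μ - subtreeMass G hG r (far e) ρ| :=
          (Finset.add_sum_erase _ _ heE).symm
        have herase : ∑ e ∈ G.edgeFinset.erase estar,
            w e * |subtreeMass G hG r (far e) μ' - subtreeMass G hG r (far e) ρ|
              = ∑ e ∈ G.edgeFinset.erase estar,
                  w e * |subtreeMass G hG r (far e) μ - subtreeMass G hG r (far e) ρ| := by
          refine Finset.sum_congr rfl (fun e he => ?_)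
          rw [hΔ'eq e (Finset.mem_of_mem_erase he) (Finset.ne_of_mem_erase he)]
        have hzero : |subtreeMass G hG r (far estar) μ' - subtreeMass G hG r (far estar) ρ|
            = 0 := by
          rw [hΔ'star]
          simp
        have habs : |subtreeMass G hG r (far estar) μ - subtreeMass G hG r (far estar) ρ|
            = Δs := by
          rw [← hΔs, abs_of_pos hpos]
        have hwpos : 0 ≤ w estar := hw estar (SimpleGraph.mem_edgeFinset.mp heE)
        calc ∑ x, ∑ y, Q (x, y) * treeDist G hG w x y
            ≤ (∑ x, ∑ y, P' (x, y) * treeDist G hG w x y) + Δs * w estar := hQcost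
          _ ≤ (∑ e ∈ G.edgeFinset,
                w e * |subtreeMass G hG r (far e) μ' - subtreeMass G hG r (far e) ρ|)
                + Δs * w estar := by linarith
          _ ≤ ∑ e ∈ G.edgeFinset,
                w e * |subtreeMass G hG r (far e) μ - subtreeMass G hG r (far e) ρ| := by
              rw [hsplit1, hsplit2, herase, hzero, habs]
              nlinarith [hwpos]

end UBmain

end TreeW

theorem tree_wasserstein_closed_form {V : Type*} [Fintype V] [DecidableEq V] [Nonempty V]
    (G : SimpleGraph V) [Fintype G.edgeSet] (hG : G.IsTree) (r : V)
    (w : Sym2 V → ℝ) (hw : ∀ e ∈ G.edgeSet, 0 ≤ w e)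
    (far : Sym2 V → V)
    (hfar : ∀ e ∈ G.edgeSet, ∃ a, e = s(a, far e) ∧ a ∈ (treePath G hG r (far e)).support)
    (μ ρ : V → ℝ) (hμ : IsProbVector μ) (hρ : IsProbVector ρ) :
    OTCost (fun p => treeDist G hG w p.1 p.2) μ ρ =
      ∑ e ∈ G.edgeFinset,
        w e * |subtreeMass G hG r (far e) μ - subtreeMass G hG r (far e) ρ| := by
  classical
  set S := { c | ∃ P, IsCoupling μ ρ P ∧
    c = ∑ x, ∑ y, P (x, y) * (fun p : V × V => treeDist G hG w p.1 p.2) (x, y) } with hS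
  have hOT : OTCost (fun p => treeDist G hG w p.1 p.2) μ ρ = sInf S := rfl
  have hlb : ∀ c ∈ S, (∑ e ∈ G.edgeFinset,
      w e * |subtreeMass G hG r (far e) μ - subtreeMass G hG r (far e) ρ|) ≤ c := by
    rintro c ⟨P, hP, rfl⟩
    exact TreeW.LB hG hfar hw hP
  obtain ⟨P, hP, hcost⟩ := TreeW.UB hG hfar hw
    (G.edgeFinset.filter
      (fun e => subtreeMass G hG r (far e) μ ≠ subtreeMass G hG r (far e) ρ)).card
    μ ρ hμ hρ le_rfl
  have hmem : (∑ x, ∑ y, P (x, y) * (fun p : V × V => treeDist G hG w p.1 p.2) (x, y)) ∈ S :=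
    ⟨P, hP, rfl⟩
  rw [hOT]
  refine le_antisymm ?_ (le_csInf ⟨_, hmem⟩ hlb)
  refine (csInf_le ⟨_, hlb⟩ hmem).trans ?_
  exact hcost
end

section
/- Let T = (V, E) be a finite rooted tree with nonnegative edge weights w. Define Φ mapping each probability vector μ on V to the vector Φ(μ) ∈ ℝ^E with Φ(μ)(e) = w(e) · μ(T_{v_e}). Then for all probability vectors μ, ρ on V, W_{d_T}(μ, ρ) = Σ_{e∈E} |Φ(μ)(e) − Φ(ρ)(e)| = ‖Φ(μ) − Φ(ρ)‖_1; that is, Φ is an isometric embedding of the set of probability vectors on T equipped with the tree-Wasserstein distance into ℝ^E with the ℓ1 norm. -/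
open SimpleGraph Finset

/-- `Φ(μ)(e) = w(e) · μ(T_{v_e})`: the weighted-subtree-mass embedding. -/
noncomputable def treeEmbed {V : Type*} [Fintype V] [DecidableEq V]
    (G : SimpleGraph V) (hG : G.IsTree) (r : V) (w : Sym2 V → ℝ) (far : Sym2 V → V)
    (μ : V → ℝ) (e : Sym2 V) : ℝ :=
  w e * subtreeMass G hG r (far e) μ

set_option linter.unusedSectionVars false

section TreeLemmas
variable {V : Type*} [DecidableEq V] {G : SimpleGraph V} (hG : G.IsTree)

lemma treePath_isPath (u v : V) : (treePath G hG u v).IsPath :=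
  (hG.existsUnique_path u v).choose_spec.1

lemma treePath_unique {u v : V} (p : G.Walk u v) (hp : p.IsPath) : p = treePath G hG u v :=
  (hG.existsUnique_path u v).choose_spec.2 p hp

lemma treePath_takeUntil {u x : V} (v : V) (h : v ∈ (treePath G hG u x).support) :
    (treePath G hG u x).takeUntil v h = treePath G hG u v :=
  treePath_unique hG _ ((treePath_isPath hG u x).takeUntil h)

lemma treePath_dropUntil {u x : V} (v : V) (h : v ∈ (treePath G hG u x).support) :
    (treePath G hG u x).dropUntil v h = treePath G hG v x :=
  treePath_unique hG _ ((treePath_isPath hG u x).dropUntil h)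

lemma treePath_adj {x y : V} (hxy : G.Adj x y) :
    treePath G hG x y = Walk.cons hxy Walk.nil :=
  (treePath_unique hG _ (by simp [Walk.isPath_def, hxy.ne])).symm

lemma mem_support_trans {r b c x : V} (h1 : b ∈ (treePath G hG r c).support)
    (h2 : c ∈ (treePath G hG r x).support) : b ∈ (treePath G hG r x).support := by
  have hsub := Walk.support_takeUntil_subset (treePath G hG r x) h2
  rw [treePath_takeUntil hG c h2] at hsub
  exact hsub h1
lemma mem_support_comparable {r u b c : V} (hb : b ∈ (treePath G hG r u).support)
    (hc : c ∈ (treePath G hG r u).support) :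
    b ∈ (treePath G hG r c).support ∨ c ∈ (treePath G hG r b).support := by
  have hsplit := Walk.take_spec (treePath G hG r u) hc
  rw [← hsplit] at hb; rw [Walk.mem_support_append_iff] at hb
  rcases hb with h | h
  · left; rwa [treePath_takeUntil hG c hc] at h
  · right
    set d := (treePath G hG r u).dropUntil c hc with hd
    have hdp : d.IsPath := (treePath_isPath hG r u).dropUntil hc
    have hpn : ((treePath G hG r c).support ++ d.support.tail).Nodup := by
      have h2 := (treePath_isPath hG r u).support_nodup
      rw [← hsplit, Walk.support_append, treePath_takeUntil hG c hc] at h2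
      exact h2
    have hsubtail : (d.takeUntil b h).support.tail ⊆ d.support.tail := by
      intro x hx
      have hx1 : x ∈ (d.takeUntil b h).support := List.mem_of_mem_tail hx
      have hxc : x ≠ c := by
        intro hxc
        have hnd := (hdp.takeUntil h).support_nodup
        rw [Walk.support_eq_cons, List.nodup_cons] at hnd
        exact hnd.1 (hxc ▸ hx)
      have hx2 : x ∈ d.support := Walk.support_takeUntil_subset d h hx1
      rw [Walk.support_eq_cons d] at hx2
      rcases List.mem_cons.1 hx2 with h' | h'
      · exact absurd h' hxc
      · exact h'
    have hq : ((treePath G hG r c).append (d.takeUntil b h)).IsPath := by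
      apply Walk.IsPath.mk'
      rw [Walk.support_append]
      rw [List.nodup_append] at hpn ⊢
      refine ⟨hpn.1, ?_, ?_⟩
      · exact ((hdp.takeUntil h).support_nodup).tail
      · intro x hx1 z hx2 hxz
        exact hpn.2.2 x hx1 z (hsubtail hx2) hxz
    have := treePath_unique hG _ hq
    rw [← this]
    exact (Walk.mem_support_append_iff _ _).2 (Or.inl (Walk.end_mem_support _))

lemma edges_step {r x y : V} (hxy : G.Adj x y) (e : Sym2 V) :
    (e ∈ (treePath G hG r y).edges) ↔
      ¬ ((e ∈ (treePath G hG r x).edges) ↔ e = s(x, y)) := by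
  by_cases h : y ∈ (treePath G hG r x).support
  · have hsplit := Walk.take_spec (treePath G hG r x) h
    have hyx : treePath G hG y x = Walk.cons hxy.symm Walk.nil := treePath_adj hG hxy.symm
    have hedges : (treePath G hG r x).edges = (treePath G hG r y).edges ++ [s(y,x)] := by
      conv_lhs => rw [← hsplit]
      rw [Walk.edges_append, treePath_takeUntil hG y h, treePath_dropUntil hG y h, hyx]
      simp
    have hxnot : x ∉ (treePath G hG r y).support := by
      have hnd := (treePath_isPath hG r x).support_nodup
      rw [← hsplit, Walk.support_append, treePath_takeUntil hG y h,
        treePath_dropUntil hG y h, hyx] at hnd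
      simp only [Walk.support_cons, Walk.support_nil, List.tail_cons] at hnd
      rw [List.nodup_append] at hnd
      intro hx
      exact hnd.2.2 x hx x (by simp) rfl
    have hkey : e = s(x,y) → e ∉ (treePath G hG r y).edges := by
      rintro rfl hmem
      exact hxnot (Walk.fst_mem_support_of_mem_edges _ hmem)
    rw [hedges]
    simp only [List.mem_append, List.mem_singleton]
    have hswap : s(y,x) = s(x,y) := Sym2.eq_swap
    rw [hswap]
    by_cases he : e = s(x,y)
    · subst he; simp [hkey rfl]
    · simp [he]
  · have hconcat : treePath G hG r y = (treePath G hG r x).concat hxy := by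
      refine (treePath_unique hG _ ?_).symm
      apply Walk.IsPath.mk'
      rw [Walk.support_concat]
      rw [List.nodup_append]
      refine ⟨(treePath_isPath hG r x).support_nodup, List.nodup_singleton _, ?_⟩
      intro z hz z2 hz2 hzz
      rw [List.mem_singleton] at hz2
      subst hz2; subst hzz; exact h hz
    have hkey : e = s(x,y) → e ∉ (treePath G hG r x).edges := by
      rintro rfl hmem
      exact h (Walk.snd_mem_support_of_mem_edges _ hmem)
    rw [hconcat, Walk.edges_concat]
    rw [List.concat_eq_append]
    simp only [List.mem_append, List.mem_singleton]
    by_cases he : e = s(x,y)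
    · subst he; simp [hkey rfl]
    · simp [he]

set_option maxHeartbeats 1000000 in
lemma edges_symmdiff_aux {r u v : V} (p : G.Walk u v) (hp : p.IsPath) (e : Sym2 V) :
    (e ∈ p.edges) ↔
      ¬((e ∈ (treePath G hG r u).edges) ↔ (e ∈ (treePath G hG r v).edges)) := by
  induction p with
  | nil => simp
  | @cons a b c hadj q ih =>
    have hq := ih (hp.of_cons)
    have hstep := edges_step hG (r := r) hadj e
    have hne : e = s(a, b) → e ∉ q.edges := by
      rintro rfl hmem
      have : a ∈ q.support := Walk.fst_mem_support_of_mem_edges _ hmem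
      rw [Walk.cons_isPath_iff] at hp
      exact hp.2 this
    rw [Walk.edges_cons, List.mem_cons]
    by_cases he : e = s(a, b)
    · subst he
      have h1 : s(a, b) ∉ q.edges := hne rfl
      tauto
    · simp only [he, iff_false, not_not, false_or] at hstep ⊢
      rw [hstep] at hq
      exact hq

lemma edges_symmdiff (r u v : V) (e : Sym2 V) :
    e ∈ (treePath G hG u v).edges ↔
      ¬((e ∈ (treePath G hG r u).edges) ↔ (e ∈ (treePath G hG r v).edges)) :=
  edges_symmdiff_aux hG (treePath G hG u v) (treePath_isPath hG u v) e

lemma mem_edges_iff_far {r : V} {e : Sym2 V} (he : e ∈ G.edgeSet) {a b : V}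
    (hab : e = s(a,b)) (ha : a ∈ (treePath G hG r b).support) (x : V) :
    e ∈ (treePath G hG r x).edges ↔ b ∈ (treePath G hG r x).support := by
  have hadj : G.Adj a b := by rwa [hab, G.mem_edgeSet] at he
  constructor
  · intro h
    subst hab
    exact Walk.snd_mem_support_of_mem_edges _ h
  · intro h
    have h1 : e ∈ (treePath G hG r b).edges := by
      have hsplit := Walk.take_spec (treePath G hG r b) ha
      have hab2 : treePath G hG a b = Walk.cons hadj Walk.nil := treePath_adj hG hadj
      conv_lhs => rw [← hsplit]
      rw [Walk.edges_append, treePath_dropUntil hG a ha, hab2]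
      simp [hab]
    have hsplit := Walk.take_spec (treePath G hG r x) h
    conv_lhs => rw [← hsplit]
    rw [Walk.edges_append]
    exact List.mem_append_left _ ((treePath_takeUntil hG b h) ▸ h1)

lemma subtree_laminar [Fintype V] (r b c : V) :
    (univ.filter (fun u => b ∈ (treePath G hG r u).support)) ⊆
      (univ.filter (fun u => c ∈ (treePath G hG r u).support)) ∨
    (univ.filter (fun u => c ∈ (treePath G hG r u).support)) ⊆
      (univ.filter (fun u => b ∈ (treePath G hG r u).support)) ∨
    Disjoint (univ.filter (fun u => b ∈ (treePath G hG r u).support))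
      (univ.filter (fun u => c ∈ (treePath G hG r u).support)) := by
  by_cases hdisj : Disjoint (univ.filter (fun u => b ∈ (treePath G hG r u).support))
      (univ.filter (fun u => c ∈ (treePath G hG r u).support))
  · exact Or.inr (Or.inr hdisj)
  · rw [Finset.not_disjoint_iff] at hdisj
    obtain ⟨u, hu1, hu2⟩ := hdisj
    rw [mem_filter] at hu1 hu2
    rcases mem_support_comparable hG hu1.2 hu2.2 with h | h
    · -- b ∈ supp (path r c) : S c ⊆ S b
      refine Or.inr (Or.inl ?_)
      intro x hx
      rw [mem_filter] at hx ⊢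
      exact ⟨mem_univ x, mem_support_trans hG h hx.2⟩
    · refine Or.inl ?_
      intro x hx
      rw [mem_filter] at hx ⊢
      exact ⟨mem_univ x, mem_support_trans hG h hx.2⟩

lemma treeDist_decomp [Fintype V] [Fintype G.edgeSet] {r : V} (w : Sym2 V → ℝ)
    {far : Sym2 V → V}
    (hfar : ∀ e ∈ G.edgeSet, ∃ a, e = s(a, far e) ∧ a ∈ (treePath G hG r (far e)).support)
    (u v : V) :
    treeDist G hG w u v = ∑ e ∈ G.edgeFinset,
      w e * |(if far e ∈ (treePath G hG r u).support then (1:ℝ) else 0)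
           - (if far e ∈ (treePath G hG r v).support then (1:ℝ) else 0)| := by
  have h0 : treeDist G hG w u v = ∑ e ∈ (treePath G hG u v).edges.toFinset, w e :=
    (List.sum_toFinset _ ((treePath_isPath hG u v).isTrail.edges_nodup)).symm
  have hsub : (treePath G hG u v).edges.toFinset ⊆ G.edgeFinset := by
    intro e he
    rw [List.mem_toFinset] at he
    rw [mem_edgeFinset]
    exact (treePath G hG u v).edges_subset_edgeSet he
  have key : ∀ e ∈ G.edgeFinset,
      w e * |(if far e ∈ (treePath G hG r u).support then (1:ℝ) else 0)
           - (if far e ∈ (treePath G hG r v).support then (1:ℝ) else 0)|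
      = (if e ∈ (treePath G hG u v).edges.toFinset then w e else 0) := by
    intro e he
    obtain ⟨a, hab, ha⟩ := hfar e (mem_edgeFinset.1 he)
    have hiff : e ∈ (treePath G hG u v).edges ↔
        ¬((far e ∈ (treePath G hG r u).support) ↔ (far e ∈ (treePath G hG r v).support)) := by
      rw [edges_symmdiff hG r u v e, mem_edges_iff_far hG (mem_edgeFinset.1 he) hab ha u,
        mem_edges_iff_far hG (mem_edgeFinset.1 he) hab ha v]
    simp only [List.mem_toFinset]
    by_cases h1 : far e ∈ (treePath G hG r u).support <;>
      by_cases h2 : far e ∈ (treePath G hG r v).support <;>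
      simp [h1, h2, hiff]
  rw [h0, Finset.sum_congr rfl key, Finset.sum_ite_mem,
    Finset.inter_eq_right.2 hsub]

end TreeLemmas

section OT
variable {X : Type*} [Fintype X] [DecidableEq X]

noncomputable def chiF (A : Finset X) (x : X) : ℝ := if x ∈ A then 1 else 0

lemma sum_sum_ite_eq (u v : X) (f : X → X → ℝ) :
    ∑ x, ∑ y, (if (x, y) = (u, v) then f x y else 0) = f u v := by
  simp only [Prod.mk.injEq, ite_and]
  rw [Finset.sum_eq_single u]
  · rw [Finset.sum_eq_single v]
    · simp
    · intro b _ hb; simp [hb]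
    · intro h; exact absurd (Finset.mem_univ v) h
  · intro b _ hb; simp [hb]
  · intro h; exact absurd (Finset.mem_univ u) h

lemma cross_signed (A : Finset X) (μ ρ : X → ℝ) (P : X × X → ℝ)
    (hPc : ∀ y, ∑ x, P (x, y) = ρ y) (hPr : ∀ x, ∑ y, P (x, y) = μ x) :
    ∑ x, ∑ y, P (x, y) * (chiF A x - chiF A y)
      = ∑ x ∈ A, μ x - ∑ x ∈ A, ρ x := by
  have h1 : ∑ x, ∑ y, P (x, y) * chiF A x = ∑ x ∈ A, μ x := by
    have h : ∀ x ∈ Finset.univ, ∑ y, P (x, y) * chiF A x = μ x * chiF A x := by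
      intro x _; rw [← Finset.sum_mul, hPr]
    rw [Finset.sum_congr rfl h]
    simp [chiF, mul_ite, Finset.sum_ite_mem]
  have h2 : ∑ x, ∑ y, P (x, y) * chiF A y = ∑ x ∈ A, ρ x := by
    rw [Finset.sum_comm]
    have h : ∀ y ∈ Finset.univ, ∑ x, P (x, y) * chiF A y = ρ y * chiF A y := by
      intro y _; rw [← Finset.sum_mul, hPc]
    rw [Finset.sum_congr rfl h]
    simp [chiF, mul_ite, Finset.sum_ite_mem]
  simp only [mul_sub, Finset.sum_sub_distrib]
  rw [h1, h2]

lemma cross_lower (A : Finset X) (μ ρ : X → ℝ) (P : X × X → ℝ)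
    (hP0 : ∀ p, 0 ≤ P p) (hPc : ∀ y, ∑ x, P (x, y) = ρ y)
    (hPr : ∀ x, ∑ y, P (x, y) = μ x) :
    |∑ x ∈ A, μ x - ∑ x ∈ A, ρ x| ≤ ∑ x, ∑ y, P (x, y) * |chiF A x - chiF A y| := by
  rw [← cross_signed A μ ρ P hPc hPr]
  calc |∑ x, ∑ y, P (x, y) * (chiF A x - chiF A y)|
      ≤ ∑ x, |∑ y, P (x, y) * (chiF A x - chiF A y)| := Finset.abs_sum_le_sum_abs _ _
    _ ≤ ∑ x, ∑ y, |P (x, y) * (chiF A x - chiF A y)| :=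
        Finset.sum_le_sum (fun x _ => Finset.abs_sum_le_sum_abs _ _)
    _ = ∑ x, ∑ y, P (x, y) * |chiF A x - chiF A y| := by
        refine Finset.sum_congr rfl fun x _ => Finset.sum_congr rfl fun y _ => ?_
        rw [abs_mul, abs_of_nonneg (hP0 _)]
lemma fix_cut_done (A : Finset X) (μ ρ : X → ℝ) (P : X × X → ℝ)
    (hPc : ∀ y, ∑ x, P (x, y) = ρ y) (hPr : ∀ x, ∑ y, P (x, y) = μ x)
    (h : (∀ p : X × X, p.1 ∈ A → p.2 ∉ A → P p = 0) ∨
         (∀ p : X × X, p.1 ∉ A → p.2 ∈ A → P p = 0)) :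
    (∑ x, ∑ y, P (x, y) * |chiF A x - chiF A y|) ≤ |∑ x ∈ A, μ x - ∑ x ∈ A, ρ x| := by
  have hsigned := cross_signed A μ ρ P hPc hPr
  rcases h with h | h
  · have he : ∀ x y : X, P (x, y) * |chiF A x - chiF A y|
        = - (P (x, y) * (chiF A x - chiF A y)) := by
      intro x y
      by_cases hx : x ∈ A <;> by_cases hy : y ∈ A
      · simp [chiF, hx, hy]
      · rw [h (x, y) hx hy]; ring
      · norm_num [chiF, hx, hy]
      · simp [chiF, hx, hy]
    rw [Finset.sum_congr rfl (fun x _ => Finset.sum_congr rfl (fun y _ => he x y))]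
    simp only [Finset.sum_neg_distrib]
    rw [hsigned]
    exact neg_le_abs _
  · have he : ∀ x y : X, P (x, y) * |chiF A x - chiF A y|
        = P (x, y) * (chiF A x - chiF A y) := by
      intro x y
      by_cases hx : x ∈ A <;> by_cases hy : y ∈ A
      · simp [chiF, hx, hy]
      · norm_num [chiF, hx, hy]
      · rw [h (x, y) hx hy]; ring
      · simp [chiF, hx, hy]
    rw [Finset.sum_congr rfl (fun x _ => Finset.sum_congr rfl (fun y _ => he x y))]
    rw [hsigned]
    exact le_abs_self _

open Classical in
lemma fix_cut (A : Finset X) (μ ρ : X → ℝ) :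
    ∀ (n : ℕ) (P : X × X → ℝ),
    (∀ p, 0 ≤ P p) → (∀ y, ∑ x, P (x, y) = ρ y) → (∀ x, ∑ y, P (x, y) = μ x) →
    ((Finset.univ.filter (fun p : X × X => P p ≠ 0 ∧ ¬(p.1 ∈ A ↔ p.2 ∈ A))).card ≤ n) →
    ∃ Q : X × X → ℝ, (∀ p, 0 ≤ Q p) ∧ (∀ y, ∑ x, Q (x, y) = ρ y) ∧
      (∀ x, ∑ y, Q (x, y) = μ x) ∧
      ((∑ x, ∑ y, Q (x, y) * |chiF A x - chiF A y|) ≤ |∑ x ∈ A, μ x - ∑ x ∈ A, ρ x|) ∧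
      ∀ B : Finset X, (A ⊆ B ∨ Disjoint A B) →
        (∑ x, ∑ y, Q (x, y) * |chiF B x - chiF B y|) ≤
        (∑ x, ∑ y, P (x, y) * |chiF B x - chiF B y|) := by
  intro n
  induction n with
  | zero =>
    intro P hP0 hPc hPr hcard
    have hfe : (Finset.univ.filter (fun p : X × X => P p ≠ 0 ∧ ¬(p.1 ∈ A ↔ p.2 ∈ A))) = ∅ :=
      Finset.card_eq_zero.1 (Nat.le_zero.1 hcard)
    have h1 : ∀ p : X × X, p.1 ∈ A → p.2 ∉ A → P p = 0 := by
      intro p hp1 hp2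
      by_contra hne
      have : p ∈ (Finset.univ.filter (fun p : X × X => P p ≠ 0 ∧ ¬(p.1 ∈ A ↔ p.2 ∈ A))) := by
        rw [Finset.mem_filter]
        exact ⟨Finset.mem_univ p, hne, fun hiff => hp2 (hiff.1 hp1)⟩
      rw [hfe] at this
      exact absurd this (Finset.notMem_empty p)
    exact ⟨P, hP0, hPc, hPr, fix_cut_done A μ ρ P hPc hPr (Or.inl h1), fun B _ => le_rfl⟩
  | succ n ih =>
    intro P hP0 hPc hPr hcard
    by_cases h1 : ∀ p : X × X, p.1 ∈ A → p.2 ∉ A → P p = 0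
    · exact ⟨P, hP0, hPc, hPr, fix_cut_done A μ ρ P hPc hPr (Or.inl h1), fun B _ => le_rfl⟩
    by_cases h2 : ∀ p : X × X, p.1 ∉ A → p.2 ∈ A → P p = 0
    · exact ⟨P, hP0, hPc, hPr, fix_cut_done A μ ρ P hPc hPr (Or.inr h2), fun B _ => le_rfl⟩
    push_neg at h1 h2
    obtain ⟨⟨x, y⟩, hx, hy, hPxy⟩ := h1
    obtain ⟨⟨x', y'⟩, hx', hy', hPxy'⟩ := h2
    simp only at hx hy hx' hy' hPxy hPxy'
    have hxx' : x ≠ x' := fun h => hx' (h ▸ hx)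
    have hyy' : y' ≠ y := fun h => hy (h ▸ hy')
    have ne1 : ((x, y) : X × X) ≠ (x, y') := fun h => hyy' (congrArg Prod.snd h).symm
    have ne2 : ((x, y) : X × X) ≠ (x', y) := fun h => hxx' (congrArg Prod.fst h)
    have ne3 : ((x, y) : X × X) ≠ (x', y') := fun h => hxx' (congrArg Prod.fst h)
    have ne4 : ((x, y') : X × X) ≠ (x', y') := fun h => hxx' (congrArg Prod.fst h)
    have ne5 : ((x', y) : X × X) ≠ (x', y') := fun h => hyy' (congrArg Prod.snd h).symm
    have hPxy0 : 0 < P (x, y) := (hP0 _).lt_of_ne (Ne.symm hPxy)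
    have hPxy'0 : 0 < P (x', y') := (hP0 _).lt_of_ne (Ne.symm hPxy')
    set δ := min (P (x, y)) (P (x', y')) with hδdef
    have hδ0 : 0 < δ := lt_min hPxy0 hPxy'0
    set Q' : X × X → ℝ := fun p =>
      P p + (if p = (x, y') then δ else 0) + (if p = (x', y) then δ else 0)
        - (if p = (x, y) then δ else 0) - (if p = (x', y') then δ else 0) with hQ'def
    have ne6 : ((x, y') : X × X) ≠ (x', y) := fun h => hxx' (congrArg Prod.fst h)
    have hxx'2 : x' ≠ x := Ne.symm hxx'
    have hyy'2 : y ≠ y' := Ne.symm hyy'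
    have hd1 : δ ≤ P (x, y) := min_le_left _ _
    have hd2 : δ ≤ P (x', y') := min_le_right _ _
    have hQ'0 : ∀ p, 0 ≤ Q' p := by
      intro p
      by_cases e1 : p = (x, y)
      · simp [hQ'def, e1, ne1, ne2, ne3]; linarith [hd1, hP0 (x, y)]
      by_cases e2 : p = (x', y')
      · simp [hQ'def, e2, Ne.symm ne4, Ne.symm ne5, Ne.symm ne3]; linarith [hd2, hP0 (x', y')]
      by_cases e3 : p = (x, y')
      · by_cases e4 : p = (x', y)
        · exact absurd (e3.symm.trans e4) ne6
        · simp [hQ'def, e3, Ne.symm ne1, ne4, ne6]; linarith [hP0 (x, y'), hδ0.le]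
      by_cases e4 : p = (x', y)
      · simp [hQ'def, e4, Ne.symm ne2, ne5, Ne.symm ne6]; linarith [hP0 (x', y), hδ0.le]
      · simp only [hQ'def, if_neg e1, if_neg e2, if_neg e3, if_neg e4]
        simpa using hP0 p
    have hcol : ∀ (u v b : X), ∑ a, (if ((a, b) : X × X) = (u, v) then δ else 0)
        = if b = v then δ else 0 := by
      intro u v b
      by_cases hb : b = v
      · subst hb; simp [Prod.mk.injEq]
      · simp [Prod.mk.injEq, hb]
    have hrow : ∀ (u v a : X), ∑ b, (if ((a, b) : X × X) = (u, v) then δ else 0)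
        = if a = u then δ else 0 := by
      intro u v a
      by_cases ha : a = u
      · subst ha; simp [Prod.mk.injEq]
      · simp [Prod.mk.injEq, ha]
    have hQ'c : ∀ b, ∑ a, Q' (a, b) = ρ b := by
      intro b
      simp only [hQ'def, Finset.sum_add_distrib, Finset.sum_sub_distrib, hcol, hPc]
      ring
    have hQ'r : ∀ a, ∑ b, Q' (a, b) = μ a := by
      intro a
      simp only [hQ'def, Finset.sum_add_distrib, Finset.sum_sub_distrib, hrow, hPr]
      ring
    have hcross : ∀ c : X → X → ℝ,
        ∑ a, ∑ b, Q' (a, b) * c a b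
          = (∑ a, ∑ b, P (a, b) * c a b)
            + δ * c x y' + δ * c x' y - δ * c x y - δ * c x' y' := by
      intro c
      simp only [hQ'def, add_mul, sub_mul, ite_mul, zero_mul,
        Finset.sum_add_distrib, Finset.sum_sub_distrib, sum_sum_ite_eq]
    have hQ'B : ∀ B : Finset X, (A ⊆ B ∨ Disjoint A B) →
        (∑ a, ∑ b, Q' (a, b) * |chiF B a - chiF B b|) ≤
        (∑ a, ∑ b, P (a, b) * |chiF B a - chiF B b|) := by
      intro B hB
      rw [hcross]
      have hxyB : chiF B x = chiF B y' := by
        rcases hB with h | h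
        · simp [chiF, h hx, h hy']
        · simp [chiF, Finset.disjoint_left.1 h hx, Finset.disjoint_left.1 h hy']
      have habs : |chiF B x' - chiF B y| ≤ |chiF B x' - chiF B y'| + |chiF B x - chiF B y| := by
        have hh : chiF B x' - chiF B y = (chiF B x' - chiF B y') + (chiF B x - chiF B y) := by
          rw [hxyB]; ring
        rw [hh]
        exact abs_add_le _ _
      have h0 : |chiF B x - chiF B y'| = 0 := by rw [hxyB, sub_self, abs_zero]
      have hm := mul_le_mul_of_nonneg_left habs hδ0.le
      rw [mul_add] at hm
      rw [h0, mul_zero]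
      linarith
    have hQ'card :
        (Finset.univ.filter (fun p : X × X => Q' p ≠ 0 ∧ ¬(p.1 ∈ A ↔ p.2 ∈ A))).card ≤ n := by
      rcases le_total (P (x, y)) (P (x', y')) with hle | hle
      · have hδeq : δ = P (x, y) := min_eq_left hle
        have hQz : Q' (x, y) = 0 := by
          simp [hQ'def, ne1, ne2, ne3, hδeq]
        have hzmem : ((x, y) : X × X) ∈
            (Finset.univ.filter (fun p : X × X => P p ≠ 0 ∧ ¬(p.1 ∈ A ↔ p.2 ∈ A))) := by
          rw [Finset.mem_filter]
          exact ⟨Finset.mem_univ _, hPxy, fun hiff => hy (hiff.1 hx)⟩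
        have hsub : (Finset.univ.filter (fun p : X × X => Q' p ≠ 0 ∧ ¬(p.1 ∈ A ↔ p.2 ∈ A))) ⊆
            (Finset.univ.filter
              (fun p : X × X => P p ≠ 0 ∧ ¬(p.1 ∈ A ↔ p.2 ∈ A))).erase (x, y) := by
          intro p hp
          rw [Finset.mem_filter] at hp
          rw [Finset.mem_erase, Finset.mem_filter]
          have hpne : p ≠ (x, y) := fun h => hp.2.1 (h ▸ hQz)
          refine ⟨hpne, Finset.mem_univ p, ?_, hp.2.2⟩
          by_cases c1 : p = (x', y')
          · rw [c1]; exact hPxy'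
          by_cases c2 : p = (x, y')
          · exact absurd (by rw [c2]; exact iff_of_true hx hy') hp.2.2
          by_cases c3 : p = (x', y)
          · exact absurd (by rw [c3]; exact iff_of_false hx' hy) hp.2.2
          · have hQP : Q' p = P p := by
              simp [hQ'def, hpne, c1, c2, c3]
            rw [← hQP]; exact hp.2.1
        calc _ ≤ _ := Finset.card_le_card hsub
          _ = _ - 1 := Finset.card_erase_of_mem hzmem
          _ ≤ n := by omega
      · have hδeq : δ = P (x', y') := min_eq_right hle
        have hQz : Q' (x', y') = 0 := by
          simp [hQ'def, Ne.symm ne4, Ne.symm ne5, Ne.symm ne3, hδeq]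
        have hzmem : ((x', y') : X × X) ∈
            (Finset.univ.filter (fun p : X × X => P p ≠ 0 ∧ ¬(p.1 ∈ A ↔ p.2 ∈ A))) := by
          rw [Finset.mem_filter]
          exact ⟨Finset.mem_univ _, hPxy', fun hiff => hx' (hiff.2 hy')⟩
        have hsub : (Finset.univ.filter (fun p : X × X => Q' p ≠ 0 ∧ ¬(p.1 ∈ A ↔ p.2 ∈ A))) ⊆
            (Finset.univ.filter
              (fun p : X × X => P p ≠ 0 ∧ ¬(p.1 ∈ A ↔ p.2 ∈ A))).erase (x', y') := by
          intro p hp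
          rw [Finset.mem_filter] at hp
          rw [Finset.mem_erase, Finset.mem_filter]
          have hpne : p ≠ (x', y') := fun h => hp.2.1 (h ▸ hQz)
          refine ⟨hpne, Finset.mem_univ p, ?_, hp.2.2⟩
          by_cases c1 : p = (x, y)
          · rw [c1]; exact hPxy
          by_cases c2 : p = (x, y')
          · exact absurd (by rw [c2]; exact iff_of_true hx hy') hp.2.2
          by_cases c3 : p = (x', y)
          · exact absurd (by rw [c3]; exact iff_of_false hx' hy) hp.2.2
          · have hQP : Q' p = P p := by
              simp [hQ'def, hpne, c1, c2, c3]
            rw [← hQP]; exact hp.2.1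
        calc _ ≤ _ := Finset.card_le_card hsub
          _ = _ - 1 := Finset.card_erase_of_mem hzmem
          _ ≤ n := by omega
    obtain ⟨Q, hQ0, hQc, hQr, hQA, hQB⟩ := ih Q' hQ'0 hQ'c hQ'r hQ'card
    exact ⟨Q, hQ0, hQc, hQr, hQA, fun B hB => (hQB B hB).trans (hQ'B B hB)⟩

open Classical in
lemma exists_opt_coupling {ι : Type*} (μ ρ : X → ℝ)
    (hμ0 : ∀ x, 0 ≤ μ x) (hρ0 : ∀ x, 0 ≤ ρ x) (hm : ∑ x, μ x = ∑ x, ρ x) :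
    ∀ (n : ℕ) (F : Finset ι) (S : ι → Finset X) (wt : ι → ℝ), F.card = n →
    (∀ i ∈ F, 0 ≤ wt i) →
    (∀ i ∈ F, ∀ j ∈ F, S i ⊆ S j ∨ S j ⊆ S i ∨ Disjoint (S i) (S j)) →
    ∃ P : X × X → ℝ, (∀ p, 0 ≤ P p) ∧ (∀ y, ∑ x, P (x, y) = ρ y) ∧
      (∀ x, ∑ y, P (x, y) = μ x) ∧
      ∑ i ∈ F, wt i * (∑ x, ∑ y, P (x, y) * |chiF (S i) x - chiF (S i) y|) ≤
      ∑ i ∈ F, wt i * |∑ x ∈ S i, μ x - ∑ x ∈ S i, ρ x| := by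
  intro n
  induction n with
  | zero =>
    intro F S wt hcard _ _
    have hF : F = ∅ := Finset.card_eq_zero.1 hcard
    subst hF
    by_cases hM : ∑ x, μ x = 0
    · refine ⟨fun _ => 0, fun _ => le_rfl, ?_, ?_, by simp⟩
      · intro y
        have : ρ y = 0 := by
          have h := (Finset.sum_eq_zero_iff_of_nonneg (fun x _ => hρ0 x)).1 (hm ▸ hM)
          exact h y (Finset.mem_univ y)
        simp [this]
      · intro x
        have : μ x = 0 := by
          have h := (Finset.sum_eq_zero_iff_of_nonneg (fun x _ => hμ0 x)).1 hM
          exact h x (Finset.mem_univ x)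
        simp [this]
    · refine ⟨fun p => μ p.1 * ρ p.2 / (∑ x, μ x), ?_, ?_, ?_, by simp⟩
      · intro p
        exact div_nonneg (mul_nonneg (hμ0 _) (hρ0 _)) (Finset.sum_nonneg fun x _ => hμ0 x)
      · intro y
        simp only
        rw [← Finset.sum_div, ← Finset.sum_mul]
        field_simp
      · intro x
        simp only
        rw [← Finset.sum_div, ← Finset.mul_sum]
        rw [← hm]
        field_simp
  | succ n ih =>
    intro F S wt hcard hwt hlam
    have hne : F.Nonempty := Finset.card_pos.1 (by omega)
    obtain ⟨i₀, hi₀, hmin⟩ := F.exists_min_image (fun i => (S i).card) hne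
    obtain ⟨P, hP0, hPc, hPr, hPle⟩ := ih (F.erase i₀) S wt
      (by rw [Finset.card_erase_of_mem hi₀, hcard]; rfl)
      (fun i hi => hwt i (Finset.mem_of_mem_erase hi))
      (fun i hi j hj => hlam i (Finset.mem_of_mem_erase hi) j (Finset.mem_of_mem_erase hj))
    obtain ⟨Q, hQ0, hQc, hQr, hQA, hQB⟩ :=
      fix_cut (S i₀) μ ρ _ P hP0 hPc hPr le_rfl
    refine ⟨Q, hQ0, hQc, hQr, ?_⟩
    rw [← Finset.add_sum_erase _ _ hi₀, ← Finset.add_sum_erase _ _ hi₀]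
    have hterm : wt i₀ * (∑ x, ∑ y, Q (x, y) * |chiF (S i₀) x - chiF (S i₀) y|) ≤
        wt i₀ * |∑ x ∈ S i₀, μ x - ∑ x ∈ S i₀, ρ x| :=
      mul_le_mul_of_nonneg_left hQA (hwt i₀ hi₀)
    have hrest : ∑ i ∈ F.erase i₀,
          wt i * (∑ x, ∑ y, Q (x, y) * |chiF (S i) x - chiF (S i) y|) ≤
        ∑ i ∈ F.erase i₀, wt i * |∑ x ∈ S i, μ x - ∑ x ∈ S i, ρ x| := by
      refine le_trans (Finset.sum_le_sum ?_) hPle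
      intro i hi
      refine mul_le_mul_of_nonneg_left ?_ (hwt i (Finset.mem_of_mem_erase hi))
      refine hQB (S i) ?_
      rcases hlam i₀ hi₀ i (Finset.mem_of_mem_erase hi) with h | h | h
      · exact Or.inl h
      · have : S i = S i₀ :=
          Finset.eq_of_subset_of_card_le h (hmin i (Finset.mem_of_mem_erase hi))
        exact Or.inl (this ▸ Finset.Subset.refl _)
      · exact Or.inr h
    exact add_le_add hterm hrest

end OT



theorem tree_wasserstein_l1_embedding {V : Type*} [Fintype V] [DecidableEq V] [Nonempty V]
    (G : SimpleGraph V) [Fintype G.edgeSet] (hG : G.IsTree) (r : V)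
    (w : Sym2 V → ℝ) (hw : ∀ e ∈ G.edgeSet, 0 ≤ w e)
    (far : Sym2 V → V)
    (hfar : ∀ e ∈ G.edgeSet, ∃ a, e = s(a, far e) ∧ a ∈ (treePath G hG r (far e)).support)
    (μ ρ : V → ℝ) (hμ : IsProbVector μ) (hρ : IsProbVector ρ) :
    OTCost (fun p => treeDist G hG w p.1 p.2) μ ρ =
      ∑ e ∈ G.edgeFinset,
        |treeEmbed G hG r w far μ e - treeEmbed G hG r w far ρ e| := by
  obtain ⟨hμ0, hμ1⟩ := hμ
  obtain ⟨hρ0, hρ1⟩ := hρ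
  set S : Sym2 V → Finset V :=
    fun e => Finset.univ.filter (fun u => far e ∈ (treePath G hG r u).support) with hS
  have hchi : ∀ (e : Sym2 V) (x : V), chiF (S e) x
      = if far e ∈ (treePath G hG r x).support then (1:ℝ) else 0 := by
    intro e x; simp [chiF, hS]
  have hdist : ∀ u v, treeDist G hG w u v
      = ∑ e ∈ G.edgeFinset, w e * |chiF (S e) u - chiF (S e) v| := by
    intro u v
    refine (treeDist_decomp hG w hfar u v).trans
      (Finset.sum_congr rfl fun e _ => ?_).symm
    rw [hchi, hchi]
  have hmass : ∀ (ν : V → ℝ) (e : Sym2 V), ∑ x ∈ S e, ν x = subtreeMass G hG r (far e) ν := by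
    intro ν e
    rw [subtreeMass, hS]
  have hRHS : ∑ e ∈ G.edgeFinset, |treeEmbed G hG r w far μ e - treeEmbed G hG r w far ρ e|
      = ∑ e ∈ G.edgeFinset, w e * |∑ x ∈ S e, μ x - ∑ x ∈ S e, ρ x| := by
    refine Finset.sum_congr rfl fun e he => ?_
    rw [treeEmbed, treeEmbed, ← hmass μ e, ← hmass ρ e, ← mul_sub, abs_mul,
      abs_of_nonneg (hw e (SimpleGraph.mem_edgeFinset.1 he))]
  have hcost : ∀ P : V × V → ℝ,
      (∑ x, ∑ y, P (x, y) * treeDist G hG w x y)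
        = ∑ e ∈ G.edgeFinset, w e *
            (∑ x, ∑ y, P (x, y) * |chiF (S e) x - chiF (S e) y|) := by
    intro P
    calc ∑ x, ∑ y, P (x, y) * treeDist G hG w x y
        = ∑ x, ∑ y, ∑ e ∈ G.edgeFinset,
            P (x, y) * (w e * |chiF (S e) x - chiF (S e) y|) := by
          refine Finset.sum_congr rfl fun x _ => Finset.sum_congr rfl fun y _ => ?_
          rw [hdist, Finset.mul_sum]
      _ = ∑ x, ∑ e ∈ G.edgeFinset, ∑ y,
            P (x, y) * (w e * |chiF (S e) x - chiF (S e) y|) :=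
          Finset.sum_congr rfl fun x _ => Finset.sum_comm
      _ = ∑ e ∈ G.edgeFinset, ∑ x, ∑ y,
            P (x, y) * (w e * |chiF (S e) x - chiF (S e) y|) := Finset.sum_comm
      _ = ∑ e ∈ G.edgeFinset, w e *
            (∑ x, ∑ y, P (x, y) * |chiF (S e) x - chiF (S e) y|) := by
          refine Finset.sum_congr rfl fun e _ => ?_
          rw [Finset.mul_sum]
          refine Finset.sum_congr rfl fun x _ => ?_
          rw [Finset.mul_sum]
          refine Finset.sum_congr rfl fun y _ => ?_
          ring
  have hlam : ∀ e ∈ G.edgeFinset, ∀ f ∈ G.edgeFinset,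
      S e ⊆ S f ∨ S f ⊆ S e ∨ Disjoint (S e) (S f) := by
    intro e _ f _
    exact subtree_laminar hG r (far e) (far f)
  have hmm : ∑ x, μ x = ∑ x, ρ x := by rw [hμ1, hρ1]
  obtain ⟨P₀, hP₀0, hP₀c, hP₀r, hP₀le⟩ := exists_opt_coupling μ ρ hμ0 hρ0 hmm
    G.edgeFinset.card G.edgeFinset S w rfl
    (fun e he => hw e (SimpleGraph.mem_edgeFinset.1 he)) hlam
  have hmem : (∑ x, ∑ y, P₀ (x, y) * treeDist G hG w x y) ∈
      {c | ∃ P, IsCoupling μ ρ P ∧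
        c = ∑ x, ∑ y, P (x, y) * ((fun p : V × V => treeDist G hG w p.1 p.2) (x, y))} :=
    ⟨P₀, ⟨hP₀0, hP₀c, hP₀r⟩, rfl⟩
  have hlb : ∀ c ∈ {c | ∃ P, IsCoupling μ ρ P ∧
      c = ∑ x, ∑ y, P (x, y) * ((fun p : V × V => treeDist G hG w p.1 p.2) (x, y))},
      (∑ e ∈ G.edgeFinset, w e * |∑ x ∈ S e, μ x - ∑ x ∈ S e, ρ x|) ≤ c := by
    rintro c ⟨P, ⟨h0, hc, hr⟩, rfl⟩
    have hcc : (∑ x, ∑ y, P (x, y) * ((fun p : V × V => treeDist G hG w p.1 p.2) (x, y)))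
        = ∑ x, ∑ y, P (x, y) * treeDist G hG w x y := rfl
    rw [hcc, hcost P]
    refine Finset.sum_le_sum fun e he => ?_
    exact mul_le_mul_of_nonneg_left (cross_lower (S e) μ ρ P h0 hc hr)
      (hw e (SimpleGraph.mem_edgeFinset.1 he))
  rw [OTCost, hRHS]
  apply le_antisymm
  · refine (csInf_le ⟨_, hlb⟩ hmem).trans ?_
    rw [hcost P₀]
    exact hP₀le
  · exact le_csInf ⟨_, hmem⟩ hlb
end

section
/- Let X be a finite set and d a dissimilarity on X. Then the subdominant sub(d) is an ultrametric on X: it is nonnegative, symmetric, vanishes exactly on the diagonal, and satisfies sub(d)(x,z) ≤ max(sub(d)(x,y), sub(d)(y,z)) for all x, y, z ∈ X. -/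
open Finset

/-- An ultrametric on a set `X`. -/
def IsUltrametric {X : Type*} (u : X → X → ℝ) : Prop :=
  (∀ x y, 0 ≤ u x y) ∧ (∀ x y, u x y = u y x) ∧ (∀ x y, u x y = 0 ↔ x = y) ∧
    (∀ x y z, u x z ≤ max (u x y) (u y z))

/-- A dissimilarity on a set `X`. -/
def IsDissimilarity {X : Type*} (d : X → X → ℝ) : Prop :=
  (∀ x y, d x y = d y x) ∧ (∀ x y, 0 ≤ d x y) ∧ (∀ x, d x x = 0) ∧
    (∀ x y, x ≠ y → 0 < d x y)

/-- The maximum of `d` over consecutive pairs of a list (a chain). -/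
def chainMax {X : Type*} (d : X → X → ℝ) : List X → ℝ
  | a :: b :: t => max (d a b) (chainMax d (b :: t))
  | _ => 0

/-- The subdominant ultrametric of a dissimilarity `d`:
`sub(d)(x,y)` is the infimum over all chains `x = z₀, z₁, …, z_k = y` (with `k ≥ 1`)
of the maximal consecutive dissimilarity, and `sub(d)(x,x) = 0`. -/
noncomputable def subdominant {X : Type*} [DecidableEq X] (d : X → X → ℝ) (x y : X) : ℝ :=
  if x = y then 0
  else sInf { m | ∃ L : List X, 2 ≤ L.length ∧ L.head? = some x ∧ L.getLast? = some y ∧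
    m = chainMax d L }

def chainSet {X : Type*} (d : X → X → ℝ) (x y : X) : Set ℝ :=
  { m | ∃ L : List X, 2 ≤ L.length ∧ L.head? = some x ∧ L.getLast? = some y ∧
    m = chainMax d L }

lemma subdominant_eq {X : Type*} [DecidableEq X] (d : X → X → ℝ) (x y : X) :
    subdominant d x y = if x = y then 0 else sInf (chainSet d x y) := rfl

section aux
variable {X : Type*} (d : X → X → ℝ)

lemma chainMax_nil : chainMax d [] = 0 := rfl
lemma chainMax_single (a : X) : chainMax d [a] = 0 := rfl
lemma chainMax_cons (a b : X) (t : List X) :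
    chainMax d (a :: b :: t) = max (d a b) (chainMax d (b :: t)) := rfl

lemma chainMax_nonneg (hnn : ∀ x y, 0 ≤ d x y) : ∀ L : List X, 0 ≤ chainMax d L
  | [] => le_refl _
  | [_] => le_refl _
  | _ :: b :: t => le_max_of_le_right (chainMax_nonneg hnn (b :: t))

variable (hnn : ∀ x y, 0 ≤ d x y)
include hnn

lemma chainMax_pair (a b : X) : chainMax d [a, b] = d a b := by
  simp [chainMax_cons, chainMax_single, hnn]

lemma chainMax_eq_d : ∀ L : List X, 2 ≤ L.length → ∃ a b, chainMax d L = d a b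
  | [], h => by simp at h
  | [_], h => by simp at h
  | [a, b], _ => ⟨a, b, chainMax_pair d hnn a b⟩
  | a :: b :: c :: t, _ => by
      rcases chainMax_eq_d (b :: c :: t) (by simp) with ⟨p, q, hpq⟩
      rcases le_total (d a b) (chainMax d (b :: c :: t)) with h | h
      · exact ⟨p, q, by rw [chainMax_cons, max_eq_right h, hpq]⟩
      · exact ⟨a, b, by rw [chainMax_cons, max_eq_left h]⟩

lemma chainMax_concat : ∀ (M : List X) (y : X), M.getLast? = some y → ∀ a : X,
    chainMax d (M ++ [a]) = max (chainMax d M) (d y a)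
  | [], y, h, _ => by simp at h
  | [c], y, h, a => by
      simp only [List.getLast?_singleton, Option.some.injEq] at h
      subst h
      simp [chainMax_pair d hnn, chainMax_single, hnn]
  | c :: c' :: M', y, h, a => by
      have h' : (c' :: M').getLast? = some y := by rw [← h]; rfl
      have ih := chainMax_concat (c' :: M') y h' a
      simp only [List.cons_append, chainMax_cons] at *
      rw [ih, max_assoc]

lemma chainMax_reverse (hsymm : ∀ x y, d x y = d y x) :
    ∀ L : List X, chainMax d L.reverse = chainMax d L
  | [] => rfl
  | [_] => rfl
  | a :: b :: t => by
      have h1 : (a :: b :: t).reverse = (b :: t).reverse ++ [a] := by simp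
      have h2 : (b :: t).reverse.getLast? = some b := by
        rw [List.getLast?_reverse]; rfl
      rw [h1, chainMax_concat d hnn _ b h2 a, chainMax_reverse hsymm (b :: t),
        chainMax_cons, hsymm b a, max_comm]

lemma chainMax_append_le (y : X) (M : List X) :
    ∀ P : List X, chainMax d (P ++ y :: M) ≤ max (chainMax d (P ++ [y])) (chainMax d (y :: M))
  | [] => le_max_right _ _
  | [a] => by
      cases M with
      | nil => simp
      | cons c M' =>
        simp only [List.cons_append, List.nil_append, chainMax_cons, chainMax_single]
        rw [max_eq_left (hnn a y)]
  | a :: b :: P' => by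
      have ih := chainMax_append_le y M (b :: P')
      simp only [List.cons_append, chainMax_cons] at *
      calc max (d a b) (chainMax d (b :: (P' ++ y :: M)))
          ≤ max (d a b) (max (chainMax d (b :: (P' ++ [y]))) (chainMax d (y :: M))) :=
            max_le_max le_rfl ih
        _ = max (max (d a b) (chainMax d (b :: (P' ++ [y])))) (chainMax d (y :: M)) := by
            rw [max_assoc]

omit hnn
lemma chainMax_pos (hpos : ∀ x y, x ≠ y → 0 < d x y) :
    ∀ (L : List X) (x y : X), L.head? = some x → L.getLast? = some y → x ≠ y →
      0 < chainMax d L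
  | [], x, y, hh, _, _ => by simp at hh
  | [a], x, y, hh, hl, hxy => by simp_all
  | a :: b :: t, x, y, hh, hl, hxy => by
      simp only [List.head?_cons, Option.some.injEq] at hh
      rw [chainMax_cons]
      by_cases hab : a = b
      · subst hab
        cases t with
        | nil => simp_all
        | cons c t' =>
          have h2 : (a :: c :: t').getLast? = some y := by rw [← hl]; rfl
          exact lt_max_of_lt_right (chainMax_pos hpos (a :: c :: t') x y (by simp [hh]) h2 hxy)
      · exact lt_max_of_lt_left (hpos a b hab)

end aux

theorem subdominant_isUltrametric {X : Type*} [Fintype X] [DecidableEq X]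
    (d : X → X → ℝ) (hd : IsDissimilarity d) :
    IsUltrametric (subdominant d) := by
  obtain ⟨hsymm, hnn, hdiag, hpos⟩ := hd
  have hmem : ∀ x y, d x y ∈ chainSet d x y := fun x y =>
    ⟨[x, y], by simp, rfl, rfl, (chainMax_pair d hnn x y).symm⟩
  have hfin : ∀ x y, (chainSet d x y).Finite := by
    intro x y
    apply Set.Finite.subset (Set.finite_range (Function.uncurry d))
    rintro m ⟨L, hL, -, -, rfl⟩
    rcases chainMax_eq_d d hnn L hL with ⟨a, b, hab⟩
    exact ⟨(a, b), hab.symm⟩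
  have hbdd : ∀ x y, BddBelow (chainSet d x y) := fun x y => (hfin x y).bddBelow
  have hne : ∀ x y, (chainSet d x y).Nonempty := fun x y => ⟨d x y, hmem x y⟩
  have hinf_mem : ∀ x y, sInf (chainSet d x y) ∈ chainSet d x y := fun x y =>
    (hne x y).csInf_mem (hfin x y)
  have hnonneg : ∀ x y, 0 ≤ subdominant d x y := by
    intro x y
    rw [subdominant_eq]
    split
    · exact le_refl 0
    · refine le_csInf (hne x y) ?_
      rintro m ⟨L, -, -, -, rfl⟩
      exact chainMax_nonneg d hnn L
  have hSsymm : ∀ x y, chainSet d x y = chainSet d y x := by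
    intro x y
    have key : ∀ x y : X, chainSet d x y ⊆ chainSet d y x := by
      intro x y m
      rintro ⟨L, hL, hh, hl, rfl⟩
      refine ⟨L.reverse, by simpa using hL, ?_, ?_, (chainMax_reverse d hnn hsymm L).symm⟩
      · rw [List.head?_reverse]; exact hl
      · rw [List.getLast?_reverse]; exact hh
    exact le_antisymm (key x y) (key y x)
  refine ⟨hnonneg, ?_, ?_, ?_⟩
  · intro x y
    rw [subdominant_eq, subdominant_eq, hSsymm]
    by_cases h : x = y <;> simp [h, eq_comm]
  · intro x y
    constructor
    · intro h
      by_contra hxy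
      have h0 : sInf (chainSet d x y) = 0 := by
        rw [subdominant_eq, if_neg hxy] at h; exact h
      obtain ⟨L, hL, hh, hl, hc⟩ := hinf_mem x y
      have := chainMax_pos d hpos L x y hh hl hxy
      rw [← hc, h0] at this
      exact lt_irrefl 0 this
    · intro h; subst h; rw [subdominant_eq, if_pos rfl]
  · intro x y z
    by_cases hxz : x = z
    · subst hxz
      rw [subdominant_eq, if_pos rfl]
      exact le_max_of_le_left (hnonneg x y)
    by_cases hxy : x = y
    · subst hxy; exact le_max_right _ _
    by_cases hyz : y = z
    · subst hyz; exact le_max_left _ _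
    obtain ⟨L1, hL1, hh1, hl1, hc1⟩ := hinf_mem x y
    obtain ⟨L2, hL2, hh2, hl2, hc2⟩ := hinf_mem y z
    have hL1ne : L1 ≠ [] := by rintro rfl; simp at hL1
    obtain ⟨M, rfl⟩ : ∃ M, L2 = y :: M := by
      cases L2 with
      | nil => simp at hL2
      | cons b M =>
        simp only [List.head?_cons, Option.some.injEq] at hh2
        exact ⟨M, by rw [hh2]⟩
    have hMne : M ≠ [] := by rintro rfl; simp at hL2
    have hlast2 : M.getLast? = some z := by
      cases M with
      | nil => exact absurd rfl hMne
      | cons m M' => rw [← hl2, List.getLast?_cons_cons]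
    have hgl : L1.getLast hL1ne = y :=
      Option.some_injective _ ((List.getLast?_eq_getLast hL1ne).symm.trans hl1)
    have hdecomp : L1.dropLast ++ [y] = L1 := by
      rw [← hgl]; exact List.dropLast_append_getLast hL1ne
    have hmemL : chainMax d (L1 ++ M) ∈ chainSet d x z := by
      refine ⟨L1 ++ M, ?_, ?_, ?_, rfl⟩
      · rw [List.length_append]; omega
      · rw [List.head?_append, hh1]; rfl
      · rw [List.getLast?_append, hlast2]; rfl
    have hbound : chainMax d (L1 ++ M) ≤ max (chainMax d L1) (chainMax d (y :: M)) := by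
      have h1 : L1 ++ M = L1.dropLast ++ y :: M := by
        conv_lhs => rw [← hdecomp]
        simp
      have hb2 := chainMax_append_le d hnn y M L1.dropLast
      rw [hdecomp] at hb2
      rw [h1]
      exact hb2
    have h1 : subdominant d x z ≤ chainMax d (L1 ++ M) := by
      rw [subdominant_eq, if_neg hxz]
      exact csInf_le (hbdd x z) hmemL
    have h2 : subdominant d x y = chainMax d L1 := by
      rw [subdominant_eq, if_neg hxy]; exact hc1
    have h3 : subdominant d y z = chainMax d (y :: M) := by
      rw [subdominant_eq, if_neg hyz]; exact hc2
    rw [h2, h3]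
    exact h1.trans hbound
end
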